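/- arXiv:1301.2131 — 9 statements merged into one kernel-verified Lean document; each statement's English description precedes it below -/
import Mathlib

section
/- The action on the polynomial ring C[∂] given by d_n · ∂^j = λ^n (∂ + n(b-1))(∂ - n)^j and c · ∂^j = 0 (extended linearly in j) defines a module structure over the Virasoro algebra, i.e. it satisfies [d_m, d_n]·p = d_m·(d_n·p) - d_n·(d_m·p) for all m, n ∈ ℤ and all polynomials p. -/
open Polynomial TensorProduct

/-- The Virasoro commutation relations for a family of operators `d i` (the action of the
basis vectors `d_i`) and a central operator `cc` (the action of the central element `c`) on a
complex vector space: `[d_i, d_j] = (j - i) d_{i+j} + δ_{i,-j} (i^3 - i)/12 c` and `c` central. -/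
def VirRep {V : Type*} [AddCommGroup V] [Module ℂ V]
    (d : ℤ → Module.End ℂ V) (cc : Module.End ℂ V) : Prop :=
  (∀ i : ℤ, cc * d i = d i * cc) ∧
    ∀ i j : ℤ, d i * d j - d j * d i =
      ((j : ℂ) - (i : ℂ)) • d (i + j) +
        (if i + j = 0 then ((i : ℂ) ^ 3 - (i : ℂ)) / 12 else 0) • cc

/-- A subspace invariant under the Virasoro action, i.e. a Virasoro submodule. -/
def VirInvariant {V : Type*} [AddCommGroup V] [Module ℂ V]
    (d : ℤ → Module.End ℂ V) (cc : Module.End ℂ V) (p : Submodule ℂ V) : Prop :=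
  (∀ i : ℤ, ∀ v ∈ p, d i v ∈ p) ∧ ∀ v ∈ p, cc v ∈ p

/-- The operator by which `d_n` acts on `Ω(λ, b) = ℂ[∂]`:
`f(∂) ↦ λ^n (∂ + n(b-1)) f(∂ - n)`. The central element acts by `0`. -/
noncomputable def omegaD (lam b : ℂ) (n : ℤ) : Module.End ℂ (Polynomial ℂ) where
  toFun f := lam ^ n • ((X + Polynomial.C ((n : ℂ) * (b - 1))) * f.comp (X - Polynomial.C (n : ℂ)))
  map_add' f g := by simp [add_comp, mul_add, smul_add]
  map_smul' a f := by
    simp only [RingHom.id_apply, smul_comp, mul_smul_comm]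
    rw [smul_comm]

/-- The diagonal action of `d_i` on a tensor product of two Virasoro modules. -/
noncomputable def tensorD {V W : Type*} [AddCommGroup V] [Module ℂ V] [AddCommGroup W]
    [Module ℂ W] (dV : ℤ → Module.End ℂ V) (dW : ℤ → Module.End ℂ W) (i : ℤ) :
    Module.End ℂ (V ⊗[ℂ] W) :=
  LinearMap.rTensor W (dV i) + LinearMap.lTensor V (dW i)

/-- The diagonal action of the central element on a tensor product of two Virasoro modules. -/
noncomputable def tensorC {V W : Type*} [AddCommGroup V] [Module ℂ V] [AddCommGroup W]
    [Module ℂ W] (cV : Module.End ℂ V) (cW : Module.End ℂ W) : Module.End ℂ (V ⊗[ℂ] W) :=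
  LinearMap.rTensor W cV + LinearMap.lTensor V cW

theorem X_sub_C_comp_X_sub_C {R : Type*} [CommRing R] (a b : R) :
    (X - C a).comp (X - C b) = X - C (a + b) := by
  simp only [sub_comp, X_comp, C_comp, C_add]
  ring

section Omega

variable {lam : ℂ} (b : ℂ)

theorem omegaD_apply (lam : ℂ) (n : ℤ) (f : ℂ[X]) :
    omegaD lam b n f = lam ^ n • ((X + C ((n : ℂ) * (b - 1))) * f.comp (X - C (n : ℂ))) :=
  rfl

theorem omegaD_omegaD_apply (hlam : lam ≠ 0) (m n : ℤ) (f : ℂ[X]) :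
    omegaD lam b m (omegaD lam b n f) =
      lam ^ (m + n) • ((X + C ((m : ℂ) * (b - 1))) * (X - C (m : ℂ) + C ((n : ℂ) * (b - 1))) *
        f.comp (X - C ((m + n : ℤ) : ℂ))) := by
  simp only [omegaD_apply, smul_comp, mul_comp, add_comp, X_comp, C_comp, comp_assoc,
    X_sub_C_comp_X_sub_C, mul_smul_comm, smul_smul, ← zpow_add₀ hlam]
  push_cast
  ring_nf

theorem omegaD_commutator (hlam : lam ≠ 0) (m n : ℤ) :
    omegaD lam b m * omegaD lam b n - omegaD lam b n * omegaD lam b m =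
      ((n : ℂ) - m) • omegaD lam b (m + n) := by
  refine LinearMap.ext fun f => ?_
  -- the quadratic terms in `X` of the two composites cancel, leaving a multiple of `d_{m+n}`
  have antisymm : (X + C ((m : ℂ) * (b - 1))) * (X - C (m : ℂ) + C ((n : ℂ) * (b - 1))) -
      (X + C ((n : ℂ) * (b - 1))) * (X - C (n : ℂ) + C ((m : ℂ) * (b - 1))) =
      C ((n : ℂ) - m) * (X + C (((m + n : ℤ) : ℂ) * (b - 1))) := by
    push_cast
    simp only [C_add, C_sub, C_mul]
    ring
  rw [LinearMap.sub_apply, Module.End.mul_apply, Module.End.mul_apply,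
    omegaD_omegaD_apply b hlam, omegaD_omegaD_apply b hlam, add_comm n m, ← smul_sub, ← sub_mul,
    antisymm, LinearMap.smul_apply, omegaD_apply, smul_eq_C_mul, smul_eq_C_mul, smul_eq_C_mul]
  ring

end Omega

/-- The action `d_n · ∂^j = λ^n (∂ + n(b-1))(∂ - n)^j`, `c · ∂^j = 0` makes
`ℂ[∂]` a module over the Virasoro algebra: the commutation relations are satisfied. -/
theorem omega_is_virasoro_module (lam b : ℂ) (hlam : lam ≠ 0) :
    VirRep (omegaD lam b) 0 := by
  refine ⟨fun i => by simp only [zero_mul, mul_zero], fun i j => ?_⟩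
  rw [omegaD_commutator b hlam, smul_zero, add_zero]
end

section
/- For λ ∈ ℂ*, the module Ω(λ, 1) has a codimension-one submodule, namely ∂·ℂ[∂] (the polynomials with zero constant term), and this submodule is isomorphic as a Virasoro module to Ω(λ, 0). -/
open Polynomial TensorProduct

namespace Polynomial

variable {R : Type*} [CommSemiring R]

theorem X_mul_mem_ker_lcoeff_zero (f : R[X]) : X * f ∈ LinearMap.ker (lcoeff R 0) := by
  simp

noncomputable def mulXEquivKerLcoeffZero : R[X] ≃ₗ[R] LinearMap.ker (lcoeff R 0) :=
  LinearEquiv.ofBijective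
    ((LinearMap.mulLeft R X).codRestrict _ X_mul_mem_ker_lcoeff_zero)
    ⟨fun _ _ h => isRegular_X.left (congrArg Subtype.val h), by
      rintro ⟨p, hp⟩
      obtain ⟨q, rfl⟩ := X_dvd_iff.2 hp
      exact ⟨q, rfl⟩⟩

@[simp]
theorem coe_mulXEquivKerLcoeffZero_apply (f : R[X]) :
    (mulXEquivKerLcoeffZero f : R[X]) = X * f :=
  rfl

theorem finrank_quotient_ker_lcoeff_zero (K : Type*) [Field K] :
    Module.finrank K (K[X] ⧸ LinearMap.ker (lcoeff K 0)) = 1 := by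
  have hsurj : Function.Surjective (lcoeff K 0) := fun a => ⟨C a, coeff_C_zero⟩
  rw [(LinearMap.quotKerEquivOfSurjective _ hsurj).finrank_eq, Module.finrank_self]

end Polynomial

section Omega

variable (lam : ℂ) (n : ℤ) (f : ℂ[X])

theorem omegaD_one_apply : omegaD lam 1 n f = lam ^ n • (X * f.comp (X - C (n : ℂ))) := by
  simp [omegaD]

theorem omegaD_zero_apply :
    omegaD lam 0 n f = lam ^ n • ((X - C (n : ℂ)) * f.comp (X - C (n : ℂ))) := by
  simp [omegaD, sub_eq_add_neg]

theorem omegaD_one_mem_ker_lcoeff_zero : omegaD lam 1 n f ∈ LinearMap.ker (lcoeff ℂ 0) := by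
  rw [omegaD_one_apply]
  exact Submodule.smul_mem _ _ (X_mul_mem_ker_lcoeff_zero _)

theorem X_mul_omegaD_zero : X * omegaD lam 0 n f = omegaD lam 1 n (X * f) := by
  rw [omegaD_zero_apply, omegaD_one_apply, mul_comp, X_comp, mul_smul_comm, mul_left_comm]

end Omega

theorem omega_one_codim_one_submodule_general (lam : ℂ) :
    VirInvariant (omegaD lam 1) 0 (LinearMap.ker (lcoeff ℂ 0)) ∧
      Module.finrank ℂ (Polynomial ℂ ⧸ LinearMap.ker (lcoeff ℂ 0)) = 1 ∧
      ∃ e : Polynomial ℂ ≃ₗ[ℂ] LinearMap.ker (lcoeff ℂ 0),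
        ∀ (n : ℤ) (f : Polynomial ℂ),
          ((e (omegaD lam 0 n f) : Polynomial ℂ)) = omegaD lam 1 n (e f : Polynomial ℂ) :=
  ⟨⟨fun i v _ => omegaD_one_mem_ker_lcoeff_zero lam i v, fun _ _ => zero_mem _⟩,
    finrank_quotient_ker_lcoeff_zero ℂ, mulXEquivKerLcoeffZero, X_mul_omegaD_zero lam⟩

/-- `Ω(λ, 1)` has the codimension-one submodule `∂·ℂ[∂]` (the polynomials with
zero constant term), and this submodule is isomorphic as a Virasoro module to `Ω(λ, 0)`. -/
theorem omega_one_codim_one_submodule (lam : ℂ) (hlam : lam ≠ 0) :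
    VirInvariant (omegaD lam 1) 0 (LinearMap.ker (lcoeff ℂ 0)) ∧
      Module.finrank ℂ (Polynomial ℂ ⧸ LinearMap.ker (lcoeff ℂ 0)) = 1 ∧
      ∃ e : Polynomial ℂ ≃ₗ[ℂ] LinearMap.ker (lcoeff ℂ 0),
        ∀ (n : ℤ) (f : Polynomial ℂ),
          ((e (omegaD lam 0 n f) : Polynomial ℂ)) = omegaD lam 1 n (e f : Polynomial ℂ) :=
  omega_one_codim_one_submodule_general lam
end

section
/- Let λ ∈ ℂ*, b ∈ ℂ \ {1}, and let V be an irreducible module over the Virasoro algebra such that for every v ∈ V there exists K(v) ∈ ℕ with d_l · v = 0 for all l ≥ K(v). Then the tensor product Ω(λ,b) ⊗ V, with the diagonal Virasoro action x·(p ⊗ v) = (x·p) ⊗ v + p ⊗ (x·v), is an irreducible Virasoro module. -/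
/-!
A nonzero submodule `M` contains some `w = ∑ ∂^i ⊗ v_i` with `v_s ≠ 0`. Since every `v_i` is killed
by `d_l` for `l ≫ 0`, there `λ^(-l) d_l w` is a polynomial in `l` whose top coefficient
`(b - 1)(-1)^s (1 ⊗ v_s)` must lie in `M`; it is nonzero because `b ≠ 1`. The vectors `z` with
`1 ⊗ z ∈ M` form a Virasoro submodule of `V`, hence all of `V`. Finally, for each `z` choose `K`
with `d_K z = 0`: then `d_K` acts on `ℂ[∂] ⊗ z` through `f ↦ λ^K (∂ + K(b-1)) f(∂ - K)`, which
sends `∂^m` to `λ^K` times a monic polynomial of degree `m + 1`, so `ℂ[∂] ⊗ z ⊆ M`.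
-/

open Polynomial TensorProduct

/-- Each linear functional turns the hypothesis into a scalar polynomial with infinitely many
roots. -/
theorem eq_zero_of_forall_sum_pow_smul_eq_zero {F W : Type*} [Field F] [AddCommGroup W]
    [Module F W] {s : Set F} (hs : s.Infinite) {n : ℕ} {u : ℕ → W}
    (h : ∀ x ∈ s, ∑ j ∈ Finset.range n, x ^ j • u j = 0) {j : ℕ} (hj : j < n) : u j = 0 := by
  classical
  refine (Module.forall_dual_apply_eq_zero_iff F (u j)).mp fun φ => ?_
  set p : F[X] := ∑ k ∈ Finset.range n, monomial k (φ (u k))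
  have hp : p = 0 := by
    refine p.eq_zero_of_infinite_isRoot (hs.mono fun x hx => ?_)
    have := congrArg φ (h x hx)
    simpa [p, eval_finsetSum, mul_comm] using this
  simpa [p, finsetSum_coeff, coeff_monomial, hj] using congrArg (coeff · j) hp

theorem Submodule.mem_of_forall_sum_pow_smul_mem {F W : Type*} [Field F] [AddCommGroup W]
    [Module F W] (M : Submodule F W) {s : Set F} (hs : s.Infinite) {n : ℕ} {u : ℕ → W}
    (h : ∀ x ∈ s, ∑ j ∈ Finset.range n, x ^ j • u j ∈ M) {j : ℕ} (hj : j < n) : u j ∈ M := by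
  rw [← Submodule.Quotient.mk_eq_zero]
  refine eq_zero_of_forall_sum_pow_smul_eq_zero (u := fun j => M.mkQ (u j)) hs (fun x hx => ?_) hj
  have hx' := (Submodule.Quotient.mk_eq_zero M).mpr (h x hx)
  rwa [← M.mkQ_apply, map_sum] at hx'

theorem Polynomial.submodule_eq_top_of_monic_image {R : Type*} [Ring R] (S : Submodule R R[X])
    (T : R[X] → R[X]) (hone : 1 ∈ S) (hT : ∀ p ∈ S, T p ∈ S)
    (hmonic : ∀ m : ℕ, (T (X ^ m)).Monic) (hdeg : ∀ m : ℕ, (T (X ^ m)).natDegree = m + 1) :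
    S = ⊤ := by
  suffices h : ∀ m : ℕ, ∀ p : R[X], p.natDegree ≤ m → p ∈ S from
    Submodule.eq_top_iff'.mpr fun p => h _ p le_rfl
  intro m
  induction m with
  | zero =>
    intro p hp
    rw [eq_C_of_natDegree_le_zero hp, ← mul_one (C _), ← smul_eq_C_mul]
    exact S.smul_mem _ hone
  | succ m ih =>
    intro p hp
    set q := T (X ^ m)
    have hq : q ∈ S := hT _ (ih _ (natDegree_X_pow_le m))
    have hq_top : q.coeff (m + 1) = 1 := hdeg m ▸ (hmonic m).coeff_natDegree
    have hlow : (p - p.coeff (m + 1) • q).natDegree ≤ m := by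
      refine natDegree_le_iff_coeff_eq_zero.mpr fun k hk => ?_
      obtain rfl | hk' := (Nat.succ_le_of_lt hk).eq_or_lt
      · rw [coeff_sub, coeff_smul, hq_top, smul_eq_mul, mul_one, sub_self]
      · rw [coeff_sub, coeff_smul, coeff_eq_zero_of_natDegree_lt (hp.trans_lt hk'),
          coeff_eq_zero_of_natDegree_lt ((hdeg m).trans_lt hk'), smul_zero, sub_zero]
    simpa using S.add_mem (ih _ hlow) (S.smul_mem (p.coeff (m + 1)) hq)

theorem Polynomial.eval_C_eq_sum_pow_smul {R : Type*} [CommRing R] (Q : R[X][X]) {N : ℕ}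
    (hN : Q.natDegree < N) (x : R) : Q.eval (C x) = ∑ j ∈ Finset.range N, x ^ j • Q.coeff j := by
  rw [eval_eq_sum_range' hN]
  exact Finset.sum_congr rfl fun j _ => by rw [smul_eq_C_mul, map_pow, mul_comm]

lemma omegaD_eq_smul (lam b : ℂ) (n : ℤ) : omegaD lam b n = lam ^ n • omegaD 1 b n := by
  refine LinearMap.ext fun f => ?_
  simp [omegaD]

lemma omegaD_one_X_pow (b : ℂ) (n : ℤ) (m : ℕ) :
    omegaD 1 b n (X ^ m) = (X + C ((n : ℂ) * (b - 1))) * (X - C (n : ℂ)) ^ m := by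
  rw [omegaD, LinearMap.coe_mk, AddHom.coe_mk, one_zpow, one_smul, X_pow_comp]

lemma monic_omegaD_one_X_pow (b : ℂ) (n : ℤ) (m : ℕ) : (omegaD 1 b n (X ^ m)).Monic := by
  rw [omegaD_one_X_pow]
  exact (monic_X_add_C _).mul ((monic_X_sub_C _).pow m)

lemma natDegree_omegaD_one_X_pow (b : ℂ) (n : ℤ) (m : ℕ) :
    (omegaD 1 b n (X ^ m)).natDegree = m + 1 := by
  rw [omegaD_one_X_pow, (monic_X_add_C _).natDegree_mul ((monic_X_sub_C _).pow m),
    natDegree_X_add_C, (monic_X_sub_C _).natDegree_pow, natDegree_X_sub_C]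
  ring

/-- `d_n ∂^i` in `Ω(1, b)`, as a polynomial in `n` with coefficients in `ℂ[∂]`. -/
noncomputable def omegaDPoly (b : ℂ) (i : ℕ) : ℂ[X][X] :=
  (C X + C (C (b - 1)) * X) * (C X - X) ^ i

lemma omegaDPoly_eval (b : ℂ) (i : ℕ) (n : ℤ) :
    (omegaDPoly b i).eval (C (n : ℂ)) = omegaD 1 b n (X ^ i) := by
  simp only [omegaDPoly, omegaD_one_X_pow, eval_mul, eval_add, eval_pow, eval_sub, eval_C, eval_X,
    ← C_mul, mul_comm (b - 1)]

lemma natDegree_C_X_sub_X : (C (X : ℂ[X]) - X).natDegree = 1 := by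
  rw [← neg_sub, natDegree_neg, natDegree_X_sub_C]

lemma natDegree_omegaDPoly_factor_le (b : ℂ) : (C X + C (C (b - 1)) * X : ℂ[X][X]).natDegree ≤ 1 :=
  natDegree_add_le_of_degree_le (by simp) (natDegree_C_mul_le _ _ |>.trans (by simp))

lemma natDegree_C_X_sub_X_pow_le (i : ℕ) : ((C (X : ℂ[X]) - X) ^ i).natDegree ≤ i :=
  natDegree_pow_le.trans (by rw [natDegree_C_X_sub_X, mul_one])

lemma natDegree_omegaDPoly_le (b : ℂ) (i : ℕ) : (omegaDPoly b i).natDegree ≤ i + 1 :=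
  natDegree_mul_le.trans (add_comm i 1 ▸
    add_le_add (natDegree_omegaDPoly_factor_le b) (natDegree_C_X_sub_X_pow_le i))

lemma omegaDPoly_coeff_succ (b : ℂ) (i : ℕ) :
    (omegaDPoly b i).coeff (i + 1) = C ((b - 1) * (-1) ^ i) := by
  have hpow : ((C (X : ℂ[X]) - X) ^ i).coeff i = (-1) ^ i := by
    simpa using coeff_pow_of_natDegree_le (m := i) natDegree_C_X_sub_X.le
  rw [omegaDPoly, add_comm i 1, coeff_mul_add_eq_of_natDegree_le (natDegree_omegaDPoly_factor_le b)
    (natDegree_C_X_sub_X_pow_le i), hpow]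
  simp

lemma tensorD_tmul {V W : Type*} [AddCommGroup V] [Module ℂ V] [AddCommGroup W] [Module ℂ W]
    (dV : ℤ → Module.End ℂ V) (dW : ℤ → Module.End ℂ W) (i : ℤ) (p : V) (v : W) :
    tensorD dV dW i (p ⊗ₜ v) = dV i p ⊗ₜ v + p ⊗ₜ dW i v := by
  simp [tensorD]

section TensorOmega

variable {V : Type*} [AddCommGroup V] [Module ℂ V]

lemma tensorD_omegaD_tmul_of_eq_zero (lam b : ℂ) (d : ℤ → Module.End ℂ V) {n : ℤ} {z : V}
    (hz : d n z = 0) (p : ℂ[X]) :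
    tensorD (omegaD lam b) d n (p ⊗ₜ z) = lam ^ n • (omegaD 1 b n p ⊗ₜ z) := by
  rw [tensorD_tmul, hz, tmul_zero, add_zero, omegaD_eq_smul, LinearMap.smul_apply, smul_tmul']

lemma exists_tensorD_omegaD_eq_smul_rTensor (lam b : ℂ) (d : ℤ → Module.End ℂ V)
    (hnil : ∀ v : V, ∃ K : ℤ, ∀ l : ℤ, K ≤ l → d l v = 0) (w : ℂ[X] ⊗[ℂ] V) :
    ∃ K : ℤ, ∀ l : ℤ, K ≤ l →
      tensorD (omegaD lam b) d l w = lam ^ l • (omegaD 1 b l).rTensor V w := by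
  induction w using TensorProduct.induction_on with
  | zero => exact ⟨0, fun l _ => by simp⟩
  | tmul p z =>
    obtain ⟨K, hK⟩ := hnil z
    exact ⟨K, fun l hl => by
      rw [tensorD_omegaD_tmul_of_eq_zero lam b d (hK l hl), LinearMap.rTensor_tmul]⟩
  | add x y hx hy =>
    obtain ⟨Kx, hKx⟩ := hx
    obtain ⟨Ky, hKy⟩ := hy
    exact ⟨max Kx Ky, fun l hl => by
      rw [map_add, map_add, hKx l (le_of_max_le_left hl), hKy l (le_of_max_le_right hl), smul_add]⟩

lemma rTensor_omegaD_one_finsupp_sum (b : ℂ) (c : ℕ →₀ V) {N : ℕ}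
    (hN : ∀ i ∈ c.support, i + 1 < N) (n : ℤ) :
    (omegaD 1 b n).rTensor V (c.sum fun i v => (X ^ i : ℂ[X]) ⊗ₜ v) =
      ∑ j ∈ Finset.range N, (n : ℂ) ^ j • c.sum fun i v => (omegaDPoly b i).coeff j ⊗ₜ v := by
  simp only [Finsupp.sum, map_sum, LinearMap.rTensor_tmul, Finset.smul_sum]
  rw [Finset.sum_comm]
  refine Finset.sum_congr rfl fun i hi => ?_
  rw [← omegaDPoly_eval,
    eval_C_eq_sum_pow_smul _ ((natDegree_omegaDPoly_le b i).trans_lt (hN i hi)), sum_tmul]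
  simp only [smul_tmul']

lemma exists_one_tmul_mem_of_rTensor_omegaD_mem {b : ℂ} (hb : b ≠ 1)
    (M : Submodule ℂ (ℂ[X] ⊗[ℂ] V)) {w : ℂ[X] ⊗[ℂ] V} (hw : w ≠ 0) (K : ℤ)
    (h : ∀ l : ℤ, K ≤ l → (omegaD 1 b l).rTensor V w ∈ M) :
    ∃ v ≠ 0, (1 : ℂ[X]) ⊗ₜ v ∈ M := by
  classical
  set c := equivFinsuppOfBasisLeft (basisMonomials ℂ) w
  have hc : c ≠ 0 := by simpa [c] using hw
  have hw_eq : w = c.sum fun i v => (X ^ i : ℂ[X]) ⊗ₜ v := by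
    rw [← (equivFinsuppOfBasisLeft (basisMonomials ℂ)).symm_apply_apply w,
      equivFinsuppOfBasisLeft_symm_apply]
    simp [c, coe_basisMonomials, X_pow_eq_monomial]
  set s := c.support.max' (Finsupp.support_nonempty_iff.mpr hc)
  have hs : s ∈ c.support := c.support.max'_mem _
  have hle : ∀ i ∈ c.support, i ≤ s := fun i hi => c.support.le_max' i hi
  have htop : (c.sum fun i v => (omegaDPoly b i).coeff (s + 1) ⊗ₜ v) ∈ M := by
    refine M.mem_of_forall_sum_pow_smul_mem ((Set.Ici_infinite K).image Int.cast_injective.injOn)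
      (u := fun j => c.sum fun i v => (omegaDPoly b i).coeff j ⊗ₜ v) ?_ (Nat.lt_succ_self (s + 1))
    rintro _ ⟨l, hl, rfl⟩
    rw [← rTensor_omegaD_one_finsupp_sum b c (fun i hi => by have := hle i hi; omega), ← hw_eq]
    exact h l hl
  have htop_eq : (c.sum fun i v => (omegaDPoly b i).coeff (s + 1) ⊗ₜ v) =
      ((b - 1) * (-1) ^ s) • ((1 : ℂ[X]) ⊗ₜ[ℂ] c s) := by
    rw [Finsupp.sum, Finset.sum_eq_single_of_mem s hs fun i hi his => ?_]
    · rw [omegaDPoly_coeff_succ, smul_tmul', smul_eq_C_mul, mul_one]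
    · rw [coeff_eq_zero_of_natDegree_lt ((natDegree_omegaDPoly_le b i).trans_lt
        (by have := hle i hi; omega)), zero_tmul]
  have hne : (b - 1) * (-1 : ℂ) ^ s ≠ 0 := mul_ne_zero (sub_ne_zero.mpr hb) (by simp)
  exact ⟨c s, Finsupp.mem_support_iff.mp hs, (M.smul_mem_iff hne).mp (htop_eq ▸ htop)⟩

end TensorOmega

section Invariant

variable {V : Type*} [AddCommGroup V] [Module ℂ V] {lam b : ℂ} {d : ℤ → Module.End ℂ V}
  {M : Submodule ℂ (ℂ[X] ⊗[ℂ] V)}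

lemma tmul_mem_of_one_tmul_mem (hlam : lam ≠ 0)
    (hM : ∀ l : ℤ, ∀ w ∈ M, tensorD (omegaD lam b) d l w ∈ M) {z : V} {K : ℤ} (hK : d K z = 0)
    (hz : (1 : ℂ[X]) ⊗ₜ z ∈ M) (p : ℂ[X]) : p ⊗ₜ z ∈ M := by
  set S := M.comap ((TensorProduct.mk ℂ ℂ[X] V).flip z)
  have hS : S = ⊤ := by
    refine submodule_eq_top_of_monic_image S (omegaD 1 b K) hz (fun q hq => ?_)
      (monic_omegaD_one_X_pow b K) (natDegree_omegaD_one_X_pow b K)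
    have := hM K _ hq
    rwa [LinearMap.flip_apply, TensorProduct.mk_apply, tensorD_omegaD_tmul_of_eq_zero lam b d hK,
      M.smul_mem_iff (zpow_ne_zero K hlam)] at this
  exact (hS ▸ Submodule.mem_top : p ∈ S)

lemma one_tmul_apply_mem (hlam : lam ≠ 0)
    (hnil : ∀ v : V, ∃ K : ℤ, ∀ l : ℤ, K ≤ l → d l v = 0)
    (hM : ∀ l : ℤ, ∀ w ∈ M, tensorD (omegaD lam b) d l w ∈ M) {z : V}
    (hz : (1 : ℂ[X]) ⊗ₜ z ∈ M) (n : ℤ) : (1 : ℂ[X]) ⊗ₜ d n z ∈ M := by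
  obtain ⟨K, hK⟩ := hnil z
  have hd := M.sub_mem (hM n _ hz)
    (tmul_mem_of_one_tmul_mem hlam hM (hK K le_rfl) hz (omegaD lam b n 1))
  rwa [tensorD_tmul, add_sub_cancel_left] at hd

end Invariant

theorem omega_tensor_irreducible_general {V : Type*} [AddCommGroup V] [Module ℂ V] [Nontrivial V]
    (lam b : ℂ) (hlam : lam ≠ 0) (hb : b ≠ 1)
    (d : ℤ → Module.End ℂ V) (cV : Module.End ℂ V)
    (hirr : ∀ p : Submodule ℂ V, VirInvariant d cV p → p = ⊥ ∨ p = ⊤)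
    (hnil : ∀ v : V, ∃ K : ℤ, ∀ l : ℤ, K ≤ l → d l v = 0) :
    Nontrivial (Polynomial ℂ ⊗[ℂ] V) ∧
      ∀ M : Submodule ℂ (Polynomial ℂ ⊗[ℂ] V),
        VirInvariant (tensorD (omegaD lam b) d) (tensorC 0 cV) M → M = ⊥ ∨ M = ⊤ := by
  refine ⟨(equivFinsuppOfBasisLeft (basisMonomials ℂ)).toEquiv.nontrivial, fun M ⟨hMd, hMc⟩ => ?_⟩
  refine or_iff_not_imp_left.mpr fun hbot => ?_
  obtain ⟨w, hwM, hw⟩ := (Submodule.ne_bot_iff M).mp hbot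
  obtain ⟨K, hK⟩ := exists_tensorD_omegaD_eq_smul_rTensor lam b d hnil w
  obtain ⟨v, hv, hvM⟩ := exists_one_tmul_mem_of_rTensor_omegaD_mem hb M hw K fun l hl => by
    simpa [hK l hl, M.smul_mem_iff (zpow_ne_zero l hlam)] using hMd l w hwM
  set N := M.comap (TensorProduct.mk ℂ ℂ[X] V 1)
  have hN : VirInvariant d cV N :=
    ⟨fun n z hz => one_tmul_apply_mem hlam hnil hMd hz n,
      fun z hz => by simpa [N, tensorC] using hMc _ hz⟩
  have hN_top : N = ⊤ := (hirr N hN).resolve_left ((Submodule.ne_bot_iff N).mpr ⟨v, hvM, hv⟩)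
  rw [eq_top_iff, ← TensorProduct.span_tmul_eq_top, Submodule.span_le]
  rintro _ ⟨p, z, rfl⟩
  obtain ⟨K, hK⟩ := hnil z
  exact tmul_mem_of_one_tmul_mem hlam hMd (hK K le_rfl) (hN_top ▸ Submodule.mem_top : z ∈ N) p

/-- for `λ ≠ 0`, `b ≠ 1` and an irreducible Virasoro module `V` on which each
vector is killed by all `d_l` with `l` large, the tensor product `Ω(λ,b) ⊗ V` with the
diagonal action is an irreducible Virasoro module. -/
theorem omega_tensor_irreducible {V : Type*} [AddCommGroup V] [Module ℂ V] [Nontrivial V]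
    (lam b : ℂ) (hlam : lam ≠ 0) (hb : b ≠ 1)
    (d : ℤ → Module.End ℂ V) (cV : Module.End ℂ V) (hrep : VirRep d cV)
    (hirr : ∀ p : Submodule ℂ V, VirInvariant d cV p → p = ⊥ ∨ p = ⊤)
    (hnil : ∀ v : V, ∃ K : ℤ, ∀ l : ℤ, K ≤ l → d l v = 0) :
    Nontrivial (Polynomial ℂ ⊗[ℂ] V) ∧
      ∀ M : Submodule ℂ (Polynomial ℂ ⊗[ℂ] V),
        VirInvariant (tensorD (omegaD lam b) d) (tensorC 0 cV) M → M = ⊥ ∨ M = ⊤ :=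
  omega_tensor_irreducible_general lam b hlam hb d cV hirr hnil
end

section
/- Let λ ∈ ℂ*, b ∈ ℂ \ {1}, and V a Virasoro module on which each d_l with l sufficiently large acts locally nilpotently pointwise (for each v there is K with d_l v = 0 for l ≥ K). If M is a nonzero submodule of Ω(λ,b) ⊗ V and w = Σ_{j=0}^s ∂^j ⊗ v_j ∈ M with v_s ≠ 0 and s minimal among nonzero elements of M, then s = 0; i.e. M contains a nonzero element of the form 1 ⊗ v. -/
open Polynomial TensorProduct

/-! For `l` large, `d_l` kills every `v_j`, so `λ^{-l} d_l w = Σ_j (∂ + l(b-1))(∂ - l)^j ⊗ v_j`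
lies in `M`. This is a polynomial in `l` of degree `s + 1` with coefficients in `Ω(λ,b) ⊗ V`,
and since it lies in `M` for infinitely many `l`, so does each coefficient.
The leading one is `(b - 1)(-1)^s (1 ⊗ v_s)`, which is a nonzero element of `M` of degree `0`;
minimality of `s` forces `s = 0`. -/
theorem Submodule.coeff_mem_of_infinite_sum_pow_smul_mem {F E : Type*} [Field F]
    [AddCommGroup E] [Module F E] {p : Submodule F E} {n : ℕ} {a : ℕ → E}
    (h : {t : F | ∑ k ∈ Finset.range n, t ^ k • a k ∈ p}.Infinite) {k : ℕ} (hk : k < n) :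
    a k ∈ p := by
  -- Test against every functional on `E ⧸ p`: each gives a scalar polynomial of degree `< n`
  -- with infinitely many roots.
  rw [← Submodule.Quotient.mk_eq_zero, ← Module.forall_dual_apply_eq_zero_iff F]
  intro φ
  set ψ := φ ∘ₗ p.mkQ
  change ψ (a k) = 0
  let Q : F[X] := ∑ k ∈ Finset.range n, C (ψ (a k)) * X ^ k
  have hQ : Q = 0 := by
    refine Q.eq_zero_of_infinite_isRoot (h.mono fun t ht => ?_)
    have hψ : ψ (∑ k ∈ Finset.range n, t ^ k • a k) = 0 := by
      rw [LinearMap.comp_apply, Submodule.mkQ_apply, (Submodule.Quotient.mk_eq_zero p).2 ht,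
        map_zero]
    simp only [map_sum, map_smul, smul_eq_mul] at hψ
    show Q.IsRoot t
    simpa only [IsRoot.def, Q, eval_finsetSum, eval_mul, eval_C, eval_pow,
      eval_X, mul_comm] using hψ
  simpa [Q, finsetSum_coeff, coeff_C_mul, coeff_X_pow, hk] using congrArg (coeff · k) hQ

theorem Polynomial.eval_algebraMap_eq_sum_range_smul {R A : Type*} [CommSemiring R] [Semiring A]
    [Algebra R A] {P : A[X]} {n : ℕ} (hP : P.natDegree < n) (t : R) :
    P.eval (algebraMap R A t) = ∑ k ∈ Finset.range n, t ^ k • P.coeff k := by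
  rw [eval_eq_sum_range' hP]
  refine Finset.sum_congr rfl fun k _ => ?_
  rw [← map_pow, ← Algebra.commutes, Algebra.smul_def]

theorem sum_eval_tmul_eq_sum_pow_smul {R A M ι : Type*} [CommSemiring R] [Semiring A]
    [Algebra R A] [AddCommMonoid M] [Module R M] (s : Finset ι) {P : ι → A[X]} (v : ι → M)
    {n : ℕ} (hP : ∀ i ∈ s, (P i).natDegree < n) (t : R) :
    ∑ i ∈ s, (P i).eval (algebraMap R A t) ⊗ₜ[R] v i =
      ∑ k ∈ Finset.range n, t ^ k • ∑ i ∈ s, (P i).coeff k ⊗ₜ[R] v i := by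
  simp_rw [Finset.smul_sum, TensorProduct.smul_tmul']
  rw [Finset.sum_comm]
  refine Finset.sum_congr rfl fun i hi => ?_
  rw [eval_algebraMap_eq_sum_range_smul (hP i hi), TensorProduct.sum_tmul]

/-- `d_l (∂ ^ j) = λ ^ l • omegaPoly b j (∂, l)`, the outer variable standing for `l`. -/
noncomputable def omegaPoly (b : ℂ) (j : ℕ) : ℂ[X][X] :=
  (C X + C (C (b - 1)) * X) * (C X - X) ^ j

theorem omegaD_X_pow (lam b : ℂ) (l : ℤ) (j : ℕ) :
    omegaD lam b l (X ^ j) = lam ^ l • (omegaPoly b j).eval (C (l : ℂ)) := by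
  simp [omegaD, omegaPoly, mul_comm]

theorem natDegree_omegaPoly_le (b : ℂ) (j : ℕ) : (omegaPoly b j).natDegree ≤ j + 1 := by
  unfold omegaPoly
  compute_degree
  omega

theorem coeff_omegaPoly_succ (b : ℂ) (j : ℕ) :
    (omegaPoly b j).coeff (j + 1) = C ((b - 1) * (-1) ^ j) := by
  have hlin : (C X + C (C (b - 1)) * X : ℂ[X][X]).natDegree ≤ 1 := by compute_degree
  have hdiff : (C X - X : ℂ[X][X]).natDegree ≤ 1 := by compute_degree
  have hpow : ((C X - X : ℂ[X][X]) ^ j).natDegree ≤ j := by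
    simpa using natDegree_pow_le_of_le j hdiff
  have htop : ((C X - X : ℂ[X][X]) ^ j).coeff j = (-1) ^ j := by
    simpa using coeff_pow_of_natDegree_le (m := j) hdiff
  rw [omegaPoly, add_comm j, coeff_mul_add_eq_of_natDegree_le hlin hpow, htop]
  simp

theorem tensorD_omegaD_sum_X_pow_tmul {V : Type*} [AddCommGroup V] [Module ℂ V] (lam b : ℂ)
    (d : ℤ → Module.End ℂ V) (l : ℤ) (s : Finset ℕ) (v : ℕ → V)
    (hv : ∀ j ∈ s, d l (v j) = 0) :
    tensorD (omegaD lam b) d l (∑ j ∈ s, ((X : ℂ[X]) ^ j) ⊗ₜ[ℂ] v j) =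
      lam ^ l • ∑ j ∈ s, (omegaPoly b j).eval (C (l : ℂ)) ⊗ₜ[ℂ] v j := by
  simp only [tensorD, map_sum, LinearMap.add_apply, LinearMap.rTensor_tmul,
    LinearMap.lTensor_tmul, omegaD_X_pow, Finset.smul_sum, TensorProduct.smul_tmul']
  exact Finset.sum_congr rfl fun j hj => by rw [hv j hj, TensorProduct.tmul_zero, add_zero]

theorem sum_coeff_omegaPoly_tmul_eq {V : Type*} [AddCommGroup V] [Module ℂ V] (b : ℂ) (s : ℕ)
    (v : ℕ → V) :
    ∑ j ∈ Finset.range (s + 1), (omegaPoly b j).coeff (s + 1) ⊗ₜ[ℂ] v j =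
      ((b - 1) * (-1) ^ s) • ((1 : ℂ[X]) ⊗ₜ[ℂ] v s) := by
  rw [Finset.sum_range_succ, Finset.sum_eq_zero fun j hj => ?_, zero_add, coeff_omegaPoly_succ,
    TensorProduct.smul_tmul', smul_eq_C_mul, mul_one]
  rw [coeff_eq_zero_of_natDegree_lt ((natDegree_omegaPoly_le b j).trans_lt
    (by simpa using hj)), TensorProduct.zero_tmul]

theorem minimal_degree_is_zero_general {V : Type*} [AddCommGroup V] [Module ℂ V]
    (lam b : ℂ) (hlam : lam ≠ 0) (hb : b ≠ 1)
    (d : ℤ → Module.End ℂ V) (cV : Module.End ℂ V)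
    (hnil : ∀ v : V, ∃ K : ℤ, ∀ l : ℤ, K ≤ l → d l v = 0)
    (M : Submodule ℂ (Polynomial ℂ ⊗[ℂ] V))
    (hM : VirInvariant (tensorD (omegaD lam b) d) (tensorC 0 cV) M)
    (s : ℕ) (v : ℕ → V) (hvs : v s ≠ 0)
    (hw : (∑ j ∈ Finset.range (s + 1), (((X : Polynomial ℂ) ^ j) ⊗ₜ[ℂ] v j)) ∈ M)
    (hmin : ∀ (s' : ℕ) (v' : ℕ → V), v' s' ≠ 0 →
      (∑ j ∈ Finset.range (s' + 1), (((X : Polynomial ℂ) ^ j) ⊗ₜ[ℂ] v' j)) ∈ M → s ≤ s') :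
    s = 0 := by
  let a (k : ℕ) := ∑ j ∈ Finset.range (s + 1), (omegaPoly b j).coeff k ⊗ₜ[ℂ] v j
  have hkill : ∀ᶠ l in Filter.atTop, ∀ j ∈ Finset.range (s + 1), d l (v j) = 0 :=
    (Filter.eventually_all_finset _).2 fun j _ => Filter.eventually_atTop.2 (hnil (v j))
  obtain ⟨K, hK⟩ := Filter.eventually_atTop.1 hkill
  have hdeg : ∀ j ∈ Finset.range (s + 1), (omegaPoly b j).natDegree < s + 2 := fun j hj =>
    (natDegree_omegaPoly_le b j).trans_lt (by simpa using hj)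
  have hmem : ∀ l : ℤ, K ≤ l → ∑ k ∈ Finset.range (s + 2), (l : ℂ) ^ k • a k ∈ M := by
    intro l hl
    have hdw := hM.1 l _ hw
    rwa [tensorD_omegaD_sum_X_pow_tmul lam b d l _ v (hK l hl),
      Submodule.smul_mem_iff _ (zpow_ne_zero l hlam), ← algebraMap_eq,
      sum_eval_tmul_eq_sum_pow_smul _ _ hdeg] at hdw
  have hinf : {t : ℂ | ∑ k ∈ Finset.range (s + 2), t ^ k • a k ∈ M}.Infinite :=
    ((Set.Ici_infinite K).image Int.cast_injective.injOn).mono <| by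
      rintro _ ⟨l, hl, rfl⟩
      exact hmem l hl
  have htop := Submodule.coeff_mem_of_infinite_sum_pow_smul_mem hinf (k := s + 1) (by omega)
  dsimp only [a] at htop
  rw [sum_coeff_omegaPoly_tmul_eq, Submodule.smul_mem_iff _
    (mul_ne_zero (sub_ne_zero.2 hb) (pow_ne_zero _ (neg_ne_zero.2 one_ne_zero)))] at htop
  exact Nat.le_zero.1 (hmin 0 (fun _ => v s) hvs (by simpa using htop))

/-- if `M` is a nonzero submodule of `Ω(λ,b) ⊗ V` and
`w = Σ_{j=0}^s ∂^j ⊗ v_j ∈ M` with `v_s ≠ 0` and `s` minimal among nonzero elements of this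
form in `M`, then `s = 0` (so `M` contains a nonzero element `1 ⊗ v`). -/
theorem minimal_degree_is_zero {V : Type*} [AddCommGroup V] [Module ℂ V]
    (lam b : ℂ) (hlam : lam ≠ 0) (hb : b ≠ 1)
    (d : ℤ → Module.End ℂ V) (cV : Module.End ℂ V) (hrep : VirRep d cV)
    (hnil : ∀ v : V, ∃ K : ℤ, ∀ l : ℤ, K ≤ l → d l v = 0)
    (M : Submodule ℂ (Polynomial ℂ ⊗[ℂ] V))
    (hM : VirInvariant (tensorD (omegaD lam b) d) (tensorC 0 cV) M) (hM0 : M ≠ ⊥)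
    (s : ℕ) (v : ℕ → V) (hvs : v s ≠ 0)
    (hw : (∑ j ∈ Finset.range (s + 1), (((X : Polynomial ℂ) ^ j) ⊗ₜ[ℂ] v j)) ∈ M)
    (hmin : ∀ (s' : ℕ) (v' : ℕ → V), v' s' ≠ 0 →
      (∑ j ∈ Finset.range (s' + 1), (((X : Polynomial ℂ) ^ j) ⊗ₜ[ℂ] v' j)) ∈ M → s ≤ s') :
    s = 0 :=
  minimal_degree_is_zero_general lam b hlam hb d cV hnil M hM s v hvs hw hmin
end

section
/- Let λ, λ' ∈ ℂ*, b, b' ∈ ℂ \ {1}, and let V, V' be irreducible Virasoro modules on which every d_k acts pointwise-nilpotently for k large (for each vector v there is K with d_l v = 0 for all l ≥ K). If Ω(λ,b) ⊗ V ≅ Ω(λ',b') ⊗ V' as Virasoro modules, then λ = λ', b = b', and V ≅ V' as Virasoro modules. -/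
open Polynomial TensorProduct

/-!
If `d_l` kills the `V`-components of `w ∈ ℂ[∂] ⊗ V`, the constant term (in `∂`) of `d_l w` is
`λ^l l (b - 1) w(-l)`, where `w(t)` substitutes `t` for `∂`; and for large `l`, `d_l` sends
`1 ⊗ v` to `λ^l (∂ ⊗ v + l (b - 1) ⊗ v)`. Transporting the second formula along an isomorphism
`e` and reading off constant terms gives `λ'^l · P(l) = λ^l · (α + β l)` with `P` a nonzero
polynomial, after pairing with a linear form on `V`. Comparing consecutive values of `l` forces
`λ = λ'`, and then `e(1 ⊗ v)` must be constant in `∂`. Hence `e` and `e⁻¹` restrict to mutually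
inverse maps between `1 ⊗ V` and `1 ⊗ V'`; the coefficient of `l` gives `b = b'`, and the remaining
terms say that this restriction intertwines the Virasoro actions.
-/

open Filter

namespace Polynomial

lemma eq_zero_of_eventually_eval_intCast_eq_zero {R : Type*} [CommRing R] [IsDomain R]
    [CharZero R] {p : R[X]} (h : ∀ᶠ l : ℤ in atTop, p.eval (l : R) = 0) : p = 0 := by
  have hinf : {l : ℤ | p.eval (l : R) = 0}.Infinite :=
    frequently_cofinite_iff_infinite.1 (h.frequently.filter_mono atTop_le_cofinite)
  refine p.eq_zero_of_infinite_isRoot ((hinf.image Int.cast_injective.injOn).mono ?_)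
  rintro _ ⟨l, hl, rfl⟩
  exact hl

lemma eq_of_eventually_zpow_mul_eval_eq {𝕜 : Type*} [Field 𝕜] [CharZero 𝕜] {μ μ' : 𝕜}
    (hμ : μ ≠ 0) (hμ' : μ' ≠ 0) {p q : 𝕜[X]} (hq : q ≠ 0)
    (h : ∀ᶠ l : ℤ in atTop, μ' ^ l * q.eval (l : 𝕜) = μ ^ l * p.eval (l : 𝕜)) : μ' = μ := by
  have hp : p ≠ 0 := by
    rintro rfl
    refine hq (eq_zero_of_eventually_eval_intCast_eq_zero ?_)
    filter_upwards [h] with l hl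
    simpa [zpow_ne_zero l hμ'] using hl
  -- comparing the relation at `l` and `l + 1` eliminates the exponentials
  have shift : C μ' * taylor 1 q * p = C μ * taylor 1 p * q := by
    rw [← sub_eq_zero]
    refine eq_zero_of_eventually_eval_intCast_eq_zero ?_
    obtain ⟨K, hK⟩ := eventually_atTop.1 h
    filter_upwards [eventually_ge_atTop K] with l hl
    have h₀ := hK l hl
    have h₁ := hK (l + 1) (by omega)
    push_cast at h₁
    rw [zpow_add_one₀ hμ', zpow_add_one₀ hμ] at h₁
    have : μ ^ l * μ' ^ l * (μ' * q.eval ((l : 𝕜) + 1) * p.eval (l : 𝕜)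
        - μ * p.eval ((l : 𝕜) + 1) * q.eval (l : 𝕜)) = 0 := by
      linear_combination (μ ^ l * p.eval (l : 𝕜)) * h₁ - (μ ^ l * μ * p.eval ((l : 𝕜) + 1)) * h₀
    simpa [taylor_eval, zpow_ne_zero, hμ, hμ'] using this
  have := congrArg leadingCoeff shift
  simp only [leadingCoeff_mul, leadingCoeff_C, leadingCoeff_taylor] at this
  exact mul_right_cancel₀ (mul_ne_zero (leadingCoeff_ne_zero.2 hq) (leadingCoeff_ne_zero.2 hp))
    (by linear_combination this)

lemma eq_C_of_eventually_mul_eval_neg_eq {𝕜 : Type*} [Field 𝕜] [CharZero 𝕜] {q : 𝕜[X]} {α β : 𝕜}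
    (h : ∀ᶠ l : ℤ in atTop, (l : 𝕜) * q.eval (-l : 𝕜) = α + β * l) : q = C (q.eval 0) := by
  have hid : X * q.comp (-X) = C α + C β * X := by
    rw [← sub_eq_zero]
    refine eq_zero_of_eventually_eval_intCast_eq_zero ?_
    filter_upwards [h] with l hl
    simp [hl]
  have hα : α = 0 := by simpa using (congrArg (eval 0) hid).symm
  have hconst : q.comp (-X) = C β := by
    rw [hα, C_0, zero_add, mul_comm] at hid
    exact mul_right_cancel₀ X_ne_zero hid
  have hq : q = C β := by rw [← comp_neg_X_comp_neg_X q, hconst, C_comp]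
  rw [hq, eval_C]

end Polynomial

lemma eq_zero_of_eventually_add_intCast_smul_eq_zero {R M : Type*} [Ring R] [AddCommGroup M]
    [Module R M] {x y : M} (h : ∀ᶠ l : ℤ in atTop, x + (l : R) • y = 0) : x = 0 ∧ y = 0 := by
  obtain ⟨K, hK⟩ := eventually_atTop.1 h
  have hy : y = 0 := by
    have h₁ := hK (K + 1) (by omega)
    rw [Int.cast_add, Int.cast_one, add_smul, one_smul, ← add_assoc, hK K le_rfl, zero_add] at h₁
    exact h₁
  refine ⟨?_, hy⟩
  simpa [hy] using hK K le_rfl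

section Evaluation

variable {K V : Type*} [Field K] [AddCommGroup V] [Module K V]

noncomputable def evalTmul (t : K) : K[X] ⊗[K] V →ₗ[K] V :=
  TensorProduct.lid K V ∘ₗ (leval t).rTensor V

@[simp]
lemma evalTmul_tmul (t : K) (f : K[X]) (v : V) : evalTmul t (f ⊗ₜ v) = f.eval t • v := by
  simp [evalTmul]

noncomputable def dualPairing (φ : Module.Dual K V) : K[X] ⊗[K] V →ₗ[K] K[X] :=
  TensorProduct.rid K K[X] ∘ₗ φ.lTensor K[X]

@[simp]
lemma dualPairing_tmul (φ : Module.Dual K V) (f : K[X]) (v : V) :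
    dualPairing φ (f ⊗ₜ v) = φ v • f := by
  simp [dualPairing]

lemma apply_evalTmul (φ : Module.Dual K V) (t : K) (w : K[X] ⊗[K] V) :
    φ (evalTmul t w) = (dualPairing φ w).eval t := by
  induction w using TensorProduct.induction_on with
  | zero => simp
  | tmul f v => simp [mul_comm]
  | add w₁ w₂ h₁ h₂ => simp [h₁, h₂]

lemma eq_zero_of_forall_dualPairing_eq_zero {w : K[X] ⊗[K] V}
    (h : ∀ φ : Module.Dual K V, dualPairing φ w = 0) : w = 0 := by
  classical
  let B := Module.Free.chooseBasis K V
  let Ψ := (B.repr.lTensor K[X]).trans (finsuppScalarRight K K K[X] _)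
  have hΨ : ∀ i, Finsupp.lapply i ∘ₗ Ψ.toLinearMap = dualPairing (B.coord i) := fun i ↦
    TensorProduct.ext' fun f v ↦ by simp [Ψ]
  refine Ψ.map_eq_zero_iff.1 (Finsupp.ext fun i ↦ ?_)
  simpa using congrArg (· w) (hΨ i) |>.trans (h _)

lemma exists_dualPairing_ne_zero {w : K[X] ⊗[K] V} (hw : w ≠ 0) :
    ∃ φ : Module.Dual K V, dualPairing φ w ≠ 0 := by
  by_contra! h
  exact hw (eq_zero_of_forall_dualPairing_eq_zero h)

lemma eq_of_eventually_zpow_smul_evalTmul_neg [CharZero K] {μ μ' : K} (hμ : μ ≠ 0) (hμ' : μ' ≠ 0)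
    {w : K[X] ⊗[K] V} (hw : w ≠ 0) {a c : V}
    (h : ∀ᶠ l : ℤ in atTop,
      μ' ^ l • ((l : K) • evalTmul (-l : K) w) = μ ^ l • (a + (l : K) • c)) :
    μ' = μ := by
  obtain ⟨φ, hφ⟩ := exists_dualPairing_ne_zero hw
  have hQ : X * (dualPairing φ w).comp (-X) ≠ 0 := by
    refine mul_ne_zero X_ne_zero fun h₀ ↦ hφ ?_
    rw [← comp_neg_X_comp_neg_X (dualPairing φ w), h₀, zero_comp]
  refine eq_of_eventually_zpow_mul_eval_eq (p := C (φ a) + C (φ c) * X) hμ hμ' hQ ?_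
  filter_upwards [h] with l hl
  have hφl := congrArg φ hl
  simp only [map_smul, map_add, apply_evalTmul, smul_eq_mul] at hφl
  simp only [eval_mul, eval_X, eval_comp, eval_neg, eval_add, eval_C]
  linear_combination hφl

lemma eq_one_tmul_of_eventually_smul_evalTmul_neg [CharZero K] {μ : K} (hμ : μ ≠ 0)
    {w : K[X] ⊗[K] V} {a c : V}
    (h : ∀ᶠ l : ℤ in atTop,
      μ ^ l • ((l : K) • evalTmul (-l : K) w) = μ ^ l • (a + (l : K) • c)) :
    w = 1 ⊗ₜ evalTmul 0 w := by
  rw [← sub_eq_zero]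
  refine eq_zero_of_forall_dualPairing_eq_zero fun φ ↦ ?_
  have hconst : dualPairing φ w = C ((dualPairing φ w).eval 0) := by
    refine eq_C_of_eventually_mul_eval_neg_eq (α := φ a) (β := φ c) ?_
    filter_upwards [h] with l hl
    have hφl := congrArg φ hl
    simp only [map_smul, map_add, apply_evalTmul, smul_eq_mul] at hφl
    exact mul_left_cancel₀ (zpow_ne_zero l hμ) (by linear_combination hφl)
  rw [map_sub, dualPairing_tmul, apply_evalTmul, smul_eq_C_mul, mul_one, ← hconst, sub_self]

end Evaluation

section Action

variable {V : Type*} [AddCommGroup V] [Module ℂ V]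

lemma tensorD_one_tmul (lam b : ℂ) (d : ℤ → Module.End ℂ V) (l : ℤ) (v : V) :
    tensorD (omegaD lam b) d l (1 ⊗ₜ v) =
      lam ^ l • (X ⊗ₜ v + ((l : ℂ) * (b - 1)) • (1 : ℂ[X]) ⊗ₜ v) + 1 ⊗ₜ d l v := by
  simp [tensorD, omegaD, smul_tmul', Polynomial.smul_eq_C_mul, mul_add, add_tmul]

@[simp]
lemma tensorC_zero_tmul (c : Module.End ℂ V) (f : ℂ[X]) (v : V) :
    tensorC 0 c (f ⊗ₜ v) = f ⊗ₜ c v := by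
  simp [tensorC]

lemma evalTmul_zero_comp_rTensor_omegaD (lam b : ℂ) (l : ℤ) :
    evalTmul 0 ∘ₗ (omegaD lam b l).rTensor V =
      (lam ^ l * (l * (b - 1))) • evalTmul (V := V) (-l : ℂ) :=
  TensorProduct.ext' fun f v ↦ by simp [omegaD, smul_smul, mul_assoc]

lemma eventually_lTensor_apply_eq_zero {d : ℤ → Module.End ℂ V}
    (hnil : ∀ v, ∀ᶠ l in atTop, d l v = 0) (w : ℂ[X] ⊗[ℂ] V) :
    ∀ᶠ l in atTop, (d l).lTensor ℂ[X] w = 0 := by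
  induction w using TensorProduct.induction_on with
  | zero => simp
  | tmul f v =>
    filter_upwards [hnil v] with l hl
    simp [hl]
  | add w₁ w₂ h₁ h₂ =>
    filter_upwards [h₁, h₂] with l hl₁ hl₂
    simp [hl₁, hl₂]

lemma eventually_evalTmul_zero_tensorD (lam b : ℂ) {d : ℤ → Module.End ℂ V}
    (hnil : ∀ v, ∀ᶠ l in atTop, d l v = 0) (w : ℂ[X] ⊗[ℂ] V) :
    ∀ᶠ l : ℤ in atTop, evalTmul 0 (tensorD (omegaD lam b) d l w) =
      (lam ^ l * (l * (b - 1))) • evalTmul (-l : ℂ) w := by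
  filter_upwards [eventually_lTensor_apply_eq_zero hnil w] with l hl
  rw [tensorD, LinearMap.add_apply, hl, add_zero, ← LinearMap.comp_apply,
    evalTmul_zero_comp_rTensor_omegaD, LinearMap.smul_apply]

end Action

section Intertwiner

variable {V V' : Type*} [AddCommGroup V] [Module ℂ V] [AddCommGroup V'] [Module ℂ V']

def Intertwines (lam b lam' b' : ℂ) (d : ℤ → Module.End ℂ V) (d' : ℤ → Module.End ℂ V')
    (e : ℂ[X] ⊗[ℂ] V →ₗ[ℂ] ℂ[X] ⊗[ℂ] V') : Prop :=
  ∀ i w, e (tensorD (omegaD lam b) d i w) = tensorD (omegaD lam' b') d' i (e w)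

variable {lam b lam' b' : ℂ} {d : ℤ → Module.End ℂ V} {d' : ℤ → Module.End ℂ V'}

lemma Intertwines.symm {e : ℂ[X] ⊗[ℂ] V ≃ₗ[ℂ] ℂ[X] ⊗[ℂ] V'}
    (he : Intertwines lam b lam' b' d d' e) : Intertwines lam' b' lam b d' d e.symm := by
  intro i w
  apply e.injective
  simpa using (he i (e.symm w)).symm

variable {e : ℂ[X] ⊗[ℂ] V →ₗ[ℂ] ℂ[X] ⊗[ℂ] V'}

lemma Intertwines.eventually_evalTmul_neg_map_one_tmul (he : Intertwines lam b lam' b' d d' e)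
    (hnil : ∀ v, ∀ᶠ l in atTop, d l v = 0) (hnil' : ∀ v, ∀ᶠ l in atTop, d' l v = 0) (v : V) :
    ∀ᶠ l : ℤ in atTop, lam' ^ l • ((l : ℂ) • evalTmul (-l : ℂ) ((b' - 1) • e (1 ⊗ₜ v))) =
      lam ^ l • (evalTmul 0 (e (X ⊗ₜ v)) + (l : ℂ) • ((b - 1) • evalTmul 0 (e (1 ⊗ₜ v)))) := by
  filter_upwards [hnil v, eventually_evalTmul_zero_tensorD lam' b' hnil' (e (1 ⊗ₜ v))]
    with l hv hev
  have h := congrArg (evalTmul 0) (he l (1 ⊗ₜ v))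
  rw [tensorD_one_tmul, hv, tmul_zero, add_zero, hev] at h
  simp only [map_smul, map_add, smul_smul] at h ⊢
  rw [h]

lemma Intertwines.lam_eq_of_injective [Nontrivial V] (he : Intertwines lam b lam' b' d d' e)
    (he_inj : Function.Injective e) (hlam : lam ≠ 0) (hlam' : lam' ≠ 0) (hb' : b' ≠ 1)
    (hnil : ∀ v, ∀ᶠ l in atTop, d l v = 0) (hnil' : ∀ v, ∀ᶠ l in atTop, d' l v = 0) :
    lam' = lam := by
  obtain ⟨v, hv⟩ := exists_ne (0 : V)
  have hv₁ : (1 : ℂ[X]) ⊗ₜ v ≠ 0 := fun h ↦ hv (by simpa using congrArg (evalTmul 0) h)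
  have hw : (b' - 1) • e (1 ⊗ₜ v) ≠ 0 :=
    smul_ne_zero (sub_ne_zero.2 hb') ((map_ne_zero_iff e he_inj).2 hv₁)
  exact eq_of_eventually_zpow_smul_evalTmul_neg hlam hlam' hw
    (he.eventually_evalTmul_neg_map_one_tmul hnil hnil' v)

lemma Intertwines.exists_map_one_tmul (he : Intertwines lam b lam b' d d' e) (hlam : lam ≠ 0)
    (hb' : b' ≠ 1) (hnil : ∀ v, ∀ᶠ l in atTop, d l v = 0)
    (hnil' : ∀ v, ∀ᶠ l in atTop, d' l v = 0) (v : V) :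
    ∃ u, e (1 ⊗ₜ v) = 1 ⊗ₜ u := by
  have h := eq_one_tmul_of_eventually_smul_evalTmul_neg hlam
    (he.eventually_evalTmul_neg_map_one_tmul hnil hnil' v)
  refine ⟨(b' - 1)⁻¹ • evalTmul 0 ((b' - 1) • e (1 ⊗ₜ v)), ?_⟩
  rw [tmul_smul, ← h, inv_smul_smul₀ (sub_ne_zero.2 hb')]

lemma Intertwines.evalTmul_zero_map_tensorD_one_tmul (he : Intertwines lam b lam' b' d d' e) {v : V}
    {u : V'} (hu : e (1 ⊗ₜ v) = 1 ⊗ₜ u) (l : ℤ) :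
    lam ^ l • (evalTmul 0 (e (X ⊗ₜ v)) + ((l : ℂ) * (b - 1)) • u) +
        evalTmul 0 (e (1 ⊗ₜ d l v)) =
      lam' ^ l • (((l : ℂ) * (b' - 1)) • u) + d' l u := by
  have h := congrArg (evalTmul 0) (he l (1 ⊗ₜ v))
  rw [tensorD_one_tmul, hu, tensorD_one_tmul] at h
  simpa [hu] using h

lemma Intertwines.eventually_evalTmul_zero_map_X_tmul (he : Intertwines lam b lam b' d d' e)
    (hlam : lam ≠ 0) (hnil : ∀ v, ∀ᶠ l in atTop, d l v = 0)
    (hnil' : ∀ v, ∀ᶠ l in atTop, d' l v = 0) {v : V} {u : V'} (hu : e (1 ⊗ₜ v) = 1 ⊗ₜ u) :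
    ∀ᶠ l : ℤ in atTop, evalTmul 0 (e (X ⊗ₜ v)) + (l : ℂ) • ((b - b') • u) = 0 := by
  filter_upwards [hnil v, hnil' u] with l hv hu'
  have h := he.evalTmul_zero_map_tensorD_one_tmul hu l
  simp only [hv, hu', tmul_zero, map_zero, add_zero] at h
  have h' := smul_right_injective V' (zpow_ne_zero l hlam) h
  rw [← sub_eq_zero] at h'
  rw [← h']
  module

lemma Intertwines.map_apply_of_map_one_tmul (he : Intertwines lam b lam b d d' e) (hlam : lam ≠ 0)
    (hnil : ∀ v, ∀ᶠ l in atTop, d l v = 0) (hnil' : ∀ v, ∀ᶠ l in atTop, d' l v = 0)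
    {τ : V → V'} (hτ : ∀ v, e (1 ⊗ₜ v) = 1 ⊗ₜ τ v) (l : ℤ) (v : V) :
    τ (d l v) = d' l (τ v) := by
  have hX := (eq_zero_of_eventually_add_intCast_smul_eq_zero
    (he.eventually_evalTmul_zero_map_X_tmul hlam hnil hnil' (hτ v))).1
  have h := he.evalTmul_zero_map_tensorD_one_tmul (hτ v) l
  rw [hX, hτ, evalTmul_tmul, eval_one, one_smul, zero_add] at h
  exact add_left_cancel h

end Intertwiner

lemma exists_linearEquiv_map_one_tmul {V V' : Type*} [AddCommGroup V] [Module ℂ V]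
    [AddCommGroup V'] [Module ℂ V'] (e : ℂ[X] ⊗[ℂ] V ≃ₗ[ℂ] ℂ[X] ⊗[ℂ] V')
    (h : ∀ v, ∃ u, e (1 ⊗ₜ v) = 1 ⊗ₜ u) (h' : ∀ u, ∃ v, e.symm (1 ⊗ₜ u) = 1 ⊗ₜ v) :
    ∃ τ : V ≃ₗ[ℂ] V', ∀ v, e (1 ⊗ₜ v) = 1 ⊗ₜ τ v := by
  let τ := evalTmul 0 ∘ₗ e.toLinearMap ∘ₗ TensorProduct.mk ℂ ℂ[X] V 1
  let σ := evalTmul 0 ∘ₗ e.symm.toLinearMap ∘ₗ TensorProduct.mk ℂ ℂ[X] V' 1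
  have hτ : ∀ v, e (1 ⊗ₜ v) = 1 ⊗ₜ τ v := fun v ↦ by
    obtain ⟨u, hu⟩ := h v
    simp [τ, hu]
  have hσ : ∀ u, e.symm (1 ⊗ₜ u) = 1 ⊗ₜ σ u := fun u ↦ by
    obtain ⟨v, hv⟩ := h' u
    simp [σ, hv]
  refine ⟨.ofLinearMap τ σ (LinearMap.ext fun u ↦ ?_) (LinearMap.ext fun v ↦ ?_), hτ⟩
  · have : (1 : ℂ[X]) ⊗ₜ[ℂ] τ (σ u) = 1 ⊗ₜ u := by rw [← hτ, ← hσ, e.apply_symm_apply]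
    simpa using congrArg (evalTmul 0) this
  · have : (1 : ℂ[X]) ⊗ₜ[ℂ] σ (τ v) = 1 ⊗ₜ v := by rw [← hσ, ← hτ, e.symm_apply_apply]
    simpa using congrArg (evalTmul 0) this

theorem tensor_iso_classification_general {V V' : Type*}
    [AddCommGroup V] [Module ℂ V] [Nontrivial V]
    [AddCommGroup V'] [Module ℂ V']
    (lam lam' b b' : ℂ) (hlam : lam ≠ 0) (hlam' : lam' ≠ 0) (hb : b ≠ 1) (hb' : b' ≠ 1)
    (d : ℤ → Module.End ℂ V) (cV : Module.End ℂ V)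
    (hnil : ∀ v : V, ∃ K : ℤ, ∀ l : ℤ, K ≤ l → d l v = 0)
    (d' : ℤ → Module.End ℂ V') (cV' : Module.End ℂ V')
    (hnil' : ∀ v : V', ∃ K : ℤ, ∀ l : ℤ, K ≤ l → d' l v = 0)
    (e : (Polynomial ℂ ⊗[ℂ] V) ≃ₗ[ℂ] (Polynomial ℂ ⊗[ℂ] V'))
    (he_d : ∀ (i : ℤ) (w : Polynomial ℂ ⊗[ℂ] V),
      e (tensorD (omegaD lam b) d i w) = tensorD (omegaD lam' b') d' i (e w))
    (he_c : ∀ w : Polynomial ℂ ⊗[ℂ] V, e (tensorC 0 cV w) = tensorC 0 cV' (e w)) :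
    lam = lam' ∧ b = b' ∧
      ∃ τ : V ≃ₗ[ℂ] V',
        (∀ (j : ℤ) (v : V), τ (d j v) = d' j (τ v)) ∧ ∀ v : V, τ (cV v) = cV' (τ v) := by
  have hnil₀ : ∀ v, ∀ᶠ l in atTop, d l v = 0 := fun v ↦ eventually_atTop.2 (hnil v)
  have hnil₀' : ∀ v, ∀ᶠ l in atTop, d' l v = 0 := fun v ↦ eventually_atTop.2 (hnil' v)
  have he : Intertwines lam b lam' b' d d' e := he_d
  obtain rfl : lam' = lam := he.lam_eq_of_injective e.injective hlam hlam' hb' hnil₀ hnil₀'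
  obtain ⟨τ, hτ⟩ := exists_linearEquiv_map_one_tmul e
    (he.exists_map_one_tmul hlam hb' hnil₀ hnil₀')
    (he.symm.exists_map_one_tmul hlam hb hnil₀' hnil₀)
  obtain rfl : b = b' := by
    obtain ⟨v, hv⟩ := exists_ne (0 : V)
    have h := (eq_zero_of_eventually_add_intCast_smul_eq_zero
      (he.eventually_evalTmul_zero_map_X_tmul hlam hnil₀ hnil₀' (hτ v))).2
    simpa [sub_eq_zero, hv] using h
  refine ⟨rfl, rfl, τ, he.map_apply_of_map_one_tmul hlam hnil₀ hnil₀' hτ, fun v ↦ ?_⟩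
  have h := he_c (1 ⊗ₜ v)
  rw [tensorC_zero_tmul, hτ, hτ, tensorC_zero_tmul] at h
  simpa using congrArg (evalTmul 0) h

/-- if `Ω(λ,b) ⊗ V` and `Ω(λ',b') ⊗ V'` are isomorphic as Virasoro modules
then `λ = λ'`, `b = b'` and `V ≅ V'` as Virasoro modules. -/
theorem tensor_iso_classification {V V' : Type*}
    [AddCommGroup V] [Module ℂ V] [Nontrivial V]
    [AddCommGroup V'] [Module ℂ V'] [Nontrivial V']
    (lam lam' b b' : ℂ) (hlam : lam ≠ 0) (hlam' : lam' ≠ 0) (hb : b ≠ 1) (hb' : b' ≠ 1)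
    (d : ℤ → Module.End ℂ V) (cV : Module.End ℂ V) (hrep : VirRep d cV)
    (hirr : ∀ p : Submodule ℂ V, VirInvariant d cV p → p = ⊥ ∨ p = ⊤)
    (hnil : ∀ v : V, ∃ K : ℤ, ∀ l : ℤ, K ≤ l → d l v = 0)
    (d' : ℤ → Module.End ℂ V') (cV' : Module.End ℂ V') (hrep' : VirRep d' cV')
    (hirr' : ∀ p : Submodule ℂ V', VirInvariant d' cV' p → p = ⊥ ∨ p = ⊤)
    (hnil' : ∀ v : V', ∃ K : ℤ, ∀ l : ℤ, K ≤ l → d' l v = 0)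
    (e : (Polynomial ℂ ⊗[ℂ] V) ≃ₗ[ℂ] (Polynomial ℂ ⊗[ℂ] V'))
    (he_d : ∀ (i : ℤ) (w : Polynomial ℂ ⊗[ℂ] V),
      e (tensorD (omegaD lam b) d i w) = tensorD (omegaD lam' b') d' i (e w))
    (he_c : ∀ w : Polynomial ℂ ⊗[ℂ] V, e (tensorC 0 cV w) = tensorC 0 cV' (e w)) :
    lam = lam' ∧ b = b' ∧
      ∃ τ : V ≃ₗ[ℂ] V',
        (∀ (j : ℤ) (v : V), τ (d j v) = d' j (τ v)) ∧ ∀ v : V, τ (cV v) = cV' (τ v) :=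
  tensor_iso_classification_general lam lam' b b' hlam hlam' hb hb' d cV hnil d' cV' hnil' e he_d
    he_c
end

section
/- Let φ : Ω(λ,b) ⊗ V → Ω(λ',b') ⊗ V' be an isomorphism of Virasoro modules (with λ, λ' ∈ ℂ*, b, b' ≠ 1, and V, V' as in the isomorphism theorem) satisfying φ(1 ⊗ v) = 1 ⊗ τ(v) for a bijective linear map τ : V → V'. Then φ(∂ ⊗ v) = ∂ ⊗ τ(v) for all v ∈ V, and τ is a Virasoro module isomorphism: τ(d_j v) = d_j τ(v) for all j ∈ ℤ and τ(c v) = c τ(v). -/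
open Polynomial TensorProduct

/-!
Apply the intertwining relation to `d_i (1 ⊗ v) = λ^i ∂ ⊗ v + i(b-1)λ^i 1 ⊗ v + 1 ⊗ d_i v`.
For `i` large, `d_i v` and `d'_i (τ v)` vanish, so `λ^i φ(∂ ⊗ v)` is a combination of `∂ ⊗ τ v`
and `1 ⊗ τ v`. Comparing two consecutive values of `i`, the linear independence of `∂ ⊗ u` and
`1 ⊗ u` for `u ≠ 0` forces `λ = λ'`, `b = b'` and `φ(∂ ⊗ v) = ∂ ⊗ τ v`. Substituting this back into
the relation for an arbitrary `i` leaves `1 ⊗ τ(d_i v) = 1 ⊗ d'_i (τ v)`; the central element acts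
on `Ω` by `0`, which gives `τ (c v) = c (τ v)` directly.
-/

theorem eq_params_and_eq_of_relations {M : Type*} [AddCommGroup M] [Module ℂ M] {x y w : M}
    (hxy : LinearIndependent ℂ ![x, y]) {lam lam' b b' : ℂ} (hlam : lam ≠ 0) (hlam' : lam' ≠ 0)
    {N : ℤ}
    (h : ∀ i ≥ N, lam ^ i • w + ((i : ℂ) * (b - 1) * lam ^ i) • y =
      lam' ^ i • x + ((i : ℂ) * (b' - 1) * lam' ^ i) • y) :
    lam = lam' ∧ b = b' ∧ w = x := by
  have hN := h N le_rfl
  have hN1 := h (N + 1) (by omega)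
  push_cast at hN1
  rw [zpow_add_one₀ hlam, zpow_add_one₀ hlam'] at hN1
  have hcomb : (lam' ^ N * (lam - lam')) • x + ((b - 1) * lam ^ N * lam -
      (b' - 1) * lam' ^ N * lam' + N * (b' - 1) * lam' ^ N * (lam - lam')) • y = 0 := by
    linear_combination (norm := module) hN1 - lam • hN
  obtain ⟨hx, hy⟩ := LinearIndependent.pair_iff.mp hxy _ _ hcomb
  obtain rfl : lam = lam' := by
    simpa [sub_eq_zero, zpow_ne_zero _ hlam'] using hx
  obtain rfl : b = b' := by
    have : (b - b') * (lam ^ N * lam) = 0 := by linear_combination hy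
    simpa [sub_eq_zero, hlam, zpow_ne_zero _ hlam] using this
  exact ⟨rfl, rfl, smul_right_injective M (zpow_ne_zero N hlam) (add_right_cancel hN)⟩

section TensorCoeff

variable {W : Type*} [AddCommGroup W] [Module ℂ W]

noncomputable def tensorCoeff (k : ℕ) : (ℂ[X] ⊗[ℂ] W) →ₗ[ℂ] W :=
  (TensorProduct.lid ℂ W).toLinearMap ∘ₗ LinearMap.rTensor W (Polynomial.lcoeff ℂ k)

@[simp]
theorem tensorCoeff_tmul (k : ℕ) (f : ℂ[X]) (w : W) :
    tensorCoeff k (f ⊗ₜ[ℂ] w) = f.coeff k • w := by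
  simp [tensorCoeff]

theorem one_tmul_injective : Function.Injective ((1 : ℂ[X]) ⊗ₜ[ℂ] · : W → _) := by
  intro u u' h
  simpa using congrArg (tensorCoeff 0) h

theorem linearIndependent_X_tmul_one_tmul {u : W} (hu : u ≠ 0) :
    LinearIndependent ℂ ![(X : ℂ[X]) ⊗ₜ[ℂ] u, (1 : ℂ[X]) ⊗ₜ[ℂ] u] := by
  refine LinearIndependent.pair_iff.mpr fun s t h => ⟨?_, ?_⟩
  · simpa [hu, coeff_one] using congrArg (tensorCoeff 1) h
  · simpa [hu] using congrArg (tensorCoeff 0) h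

end TensorCoeff

theorem omegaD_one (lam b : ℂ) (i : ℤ) :
    omegaD lam b i 1 = lam ^ i • X + ((i : ℂ) * (b - 1) * lam ^ i) • (1 : ℂ[X]) := by
  simp only [omegaD, LinearMap.coe_mk, AddHom.coe_mk, one_comp, mul_one]
  rw [smul_add, Polynomial.C_eq_algebraMap, Algebra.algebraMap_eq_smul_one, smul_smul,
    mul_comm (lam ^ i)]

theorem tensorD_omegaD_one_tmul {W : Type*} [AddCommGroup W] [Module ℂ W] (lam b : ℂ)
    (dW : ℤ → Module.End ℂ W) (i : ℤ) (w : W) :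
    tensorD (omegaD lam b) dW i ((1 : ℂ[X]) ⊗ₜ[ℂ] w) =
      lam ^ i • ((X : ℂ[X]) ⊗ₜ[ℂ] w) + ((i : ℂ) * (b - 1) * lam ^ i) • ((1 : ℂ[X]) ⊗ₜ[ℂ] w)
        + (1 : ℂ[X]) ⊗ₜ[ℂ] dW i w := by
  simp only [tensorD, LinearMap.add_apply, LinearMap.rTensor_tmul, LinearMap.lTensor_tmul,
    omegaD_one, add_tmul, smul_tmul']

theorem tensorC_zero_one_tmul {W : Type*} [AddCommGroup W] [Module ℂ W] (cW : Module.End ℂ W)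
    (w : W) :
    tensorC (0 : Module.End ℂ ℂ[X]) cW ((1 : ℂ[X]) ⊗ₜ[ℂ] w) = (1 : ℂ[X]) ⊗ₜ[ℂ] cW w := by
  simp [tensorC]

section Intertwiner

variable {V V' : Type*} [AddCommGroup V] [Module ℂ V] [AddCommGroup V'] [Module ℂ V']
  {lam lam' b b' : ℂ} {d : ℤ → Module.End ℂ V} {d' : ℤ → Module.End ℂ V'}
  {φ : (ℂ[X] ⊗[ℂ] V) →ₗ[ℂ] (ℂ[X] ⊗[ℂ] V')} {τ : V →ₗ[ℂ] V'}

theorem map_tensorD_one_tmul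
    (hφ_d : ∀ (i : ℤ) (w : ℂ[X] ⊗[ℂ] V),
      φ (tensorD (omegaD lam b) d i w) = tensorD (omegaD lam' b') d' i (φ w))
    (hτ : ∀ v : V, φ ((1 : ℂ[X]) ⊗ₜ[ℂ] v) = (1 : ℂ[X]) ⊗ₜ[ℂ] τ v) (i : ℤ) (v : V) :
    lam ^ i • φ ((X : ℂ[X]) ⊗ₜ[ℂ] v) + ((i : ℂ) * (b - 1) * lam ^ i) • ((1 : ℂ[X]) ⊗ₜ[ℂ] τ v)
        + (1 : ℂ[X]) ⊗ₜ[ℂ] τ (d i v) =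
      lam' ^ i • ((X : ℂ[X]) ⊗ₜ[ℂ] τ v) + ((i : ℂ) * (b' - 1) * lam' ^ i) • ((1 : ℂ[X]) ⊗ₜ[ℂ] τ v)
        + (1 : ℂ[X]) ⊗ₜ[ℂ] d' i (τ v) := by
  have h := hφ_d i ((1 : ℂ[X]) ⊗ₜ[ℂ] v)
  rwa [tensorD_omegaD_one_tmul, hτ, tensorD_omegaD_one_tmul, map_add, map_add, map_smul, map_smul,
    hτ, hτ] at h

theorem eq_params_and_map_X_tmul (hlam : lam ≠ 0) (hlam' : lam' ≠ 0)
    (hφ_d : ∀ (i : ℤ) (w : ℂ[X] ⊗[ℂ] V),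
      φ (tensorD (omegaD lam b) d i w) = tensorD (omegaD lam' b') d' i (φ w))
    (hτ : ∀ v : V, φ ((1 : ℂ[X]) ⊗ₜ[ℂ] v) = (1 : ℂ[X]) ⊗ₜ[ℂ] τ v)
    {v : V} (hv : τ v ≠ 0) {N : ℤ} (hd : ∀ l ≥ N, d l v = 0) (hd' : ∀ l ≥ N, d' l (τ v) = 0) :
    lam = lam' ∧ b = b' ∧ φ ((X : ℂ[X]) ⊗ₜ[ℂ] v) = (X : ℂ[X]) ⊗ₜ[ℂ] τ v := by
  refine eq_params_and_eq_of_relations (linearIndependent_X_tmul_one_tmul hv) hlam hlam' (N := N)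
    fun i hi => ?_
  simpa [hd i hi, hd' i hi] using map_tensorD_one_tmul hφ_d hτ i v

theorem map_d_of_map_X_tmul
    (hφ_d : ∀ (i : ℤ) (w : ℂ[X] ⊗[ℂ] V),
      φ (tensorD (omegaD lam b) d i w) = tensorD (omegaD lam b) d' i (φ w))
    (hτ : ∀ v : V, φ ((1 : ℂ[X]) ⊗ₜ[ℂ] v) = (1 : ℂ[X]) ⊗ₜ[ℂ] τ v)
    {v : V} (hX : φ ((X : ℂ[X]) ⊗ₜ[ℂ] v) = (X : ℂ[X]) ⊗ₜ[ℂ] τ v) (j : ℤ) :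
    τ (d j v) = d' j (τ v) := by
  have h := map_tensorD_one_tmul hφ_d hτ j v
  rw [hX] at h
  exact one_tmul_injective (add_left_cancel h)

end Intertwiner

theorem iso_restricts_to_tau_general {V V' : Type*}
    [AddCommGroup V] [Module ℂ V]
    [AddCommGroup V'] [Module ℂ V']
    (lam lam' b b' : ℂ) (hlam : lam ≠ 0) (hlam' : lam' ≠ 0)
    (d : ℤ → Module.End ℂ V) (cV : Module.End ℂ V)
    (hnil : ∀ v : V, ∃ K : ℤ, ∀ l : ℤ, K ≤ l → d l v = 0)
    (d' : ℤ → Module.End ℂ V') (cV' : Module.End ℂ V')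
    (hnil' : ∀ v : V', ∃ K : ℤ, ∀ l : ℤ, K ≤ l → d' l v = 0)
    (φ : (Polynomial ℂ ⊗[ℂ] V) ≃ₗ[ℂ] (Polynomial ℂ ⊗[ℂ] V'))
    (hφ_d : ∀ (i : ℤ) (w : Polynomial ℂ ⊗[ℂ] V),
      φ (tensorD (omegaD lam b) d i w) = tensorD (omegaD lam' b') d' i (φ w))
    (hφ_c : ∀ w : Polynomial ℂ ⊗[ℂ] V, φ (tensorC 0 cV w) = tensorC 0 cV' (φ w))
    (τ : V ≃ₗ[ℂ] V')
    (hτ : ∀ v : V, φ ((1 : Polynomial ℂ) ⊗ₜ[ℂ] v) = (1 : Polynomial ℂ) ⊗ₜ[ℂ] τ v) :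
    (∀ v : V, φ ((X : Polynomial ℂ) ⊗ₜ[ℂ] v) = (X : Polynomial ℂ) ⊗ₜ[ℂ] τ v) ∧
      (∀ (j : ℤ) (v : V), τ (d j v) = d' j (τ v)) ∧ ∀ v : V, τ (cV v) = cV' (τ v) := by
  have hparams : ∀ v ≠ 0, lam = lam' ∧ b = b' ∧
      φ ((X : Polynomial ℂ) ⊗ₜ[ℂ] v) = (X : Polynomial ℂ) ⊗ₜ[ℂ] τ v := by
    intro v hv
    obtain ⟨K, hK⟩ := hnil v
    obtain ⟨K', hK'⟩ := hnil' (τ v)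
    exact eq_params_and_map_X_tmul (φ := φ.toLinearMap) (τ := τ.toLinearMap) hlam hlam' hφ_d hτ
      (by simpa using hv) (N := max K K') (fun l hl => hK l (le_of_max_le_left hl))
      (fun l hl => hK' l (le_of_max_le_right hl))
  refine ⟨fun v => ?_, fun j v => ?_, fun v => ?_⟩
  · rcases eq_or_ne v 0 with rfl | hv
    · simp
    · exact (hparams v hv).2.2
  · rcases eq_or_ne v 0 with rfl | hv
    · simp
    · obtain ⟨rfl, rfl, hX⟩ := hparams v hv
      exact map_d_of_map_X_tmul (φ := φ.toLinearMap) (τ := τ.toLinearMap) hφ_d hτ hX j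
  · apply one_tmul_injective
    dsimp only
    rw [← hτ, ← tensorC_zero_one_tmul, hφ_c, hτ, tensorC_zero_one_tmul]

/-- if an isomorphism `φ` of `Ω(λ,b) ⊗ V` with `Ω(λ',b') ⊗ V'` satisfies
`φ(1 ⊗ v) = 1 ⊗ τ(v)` for a bijective linear map `τ : V → V'`, then
`φ(∂ ⊗ v) = ∂ ⊗ τ(v)` and `τ` is a Virasoro module isomorphism. -/
theorem iso_restricts_to_tau {V V' : Type*}
    [AddCommGroup V] [Module ℂ V] [Nontrivial V]
    [AddCommGroup V'] [Module ℂ V'] [Nontrivial V']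
    (lam lam' b b' : ℂ) (hlam : lam ≠ 0) (hlam' : lam' ≠ 0) (hb : b ≠ 1) (hb' : b' ≠ 1)
    (d : ℤ → Module.End ℂ V) (cV : Module.End ℂ V) (hrep : VirRep d cV)
    (hirr : ∀ p : Submodule ℂ V, VirInvariant d cV p → p = ⊥ ∨ p = ⊤)
    (hnil : ∀ v : V, ∃ K : ℤ, ∀ l : ℤ, K ≤ l → d l v = 0)
    (d' : ℤ → Module.End ℂ V') (cV' : Module.End ℂ V') (hrep' : VirRep d' cV')
    (hirr' : ∀ p : Submodule ℂ V', VirInvariant d' cV' p → p = ⊥ ∨ p = ⊤)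
    (hnil' : ∀ v : V', ∃ K : ℤ, ∀ l : ℤ, K ≤ l → d' l v = 0)
    (φ : (Polynomial ℂ ⊗[ℂ] V) ≃ₗ[ℂ] (Polynomial ℂ ⊗[ℂ] V'))
    (hφ_d : ∀ (i : ℤ) (w : Polynomial ℂ ⊗[ℂ] V),
      φ (tensorD (omegaD lam b) d i w) = tensorD (omegaD lam' b') d' i (φ w))
    (hφ_c : ∀ w : Polynomial ℂ ⊗[ℂ] V, φ (tensorC 0 cV w) = tensorC 0 cV' (φ w))
    (τ : V ≃ₗ[ℂ] V')
    (hτ : ∀ v : V, φ ((1 : Polynomial ℂ) ⊗ₜ[ℂ] v) = (1 : Polynomial ℂ) ⊗ₜ[ℂ] τ v) :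
    (∀ v : V, φ ((X : Polynomial ℂ) ⊗ₜ[ℂ] v) = (X : Polynomial ℂ) ⊗ₜ[ℂ] τ v) ∧
      (∀ (j : ℤ) (v : V), τ (d j v) = d' j (τ v)) ∧ ∀ v : V, τ (cV v) = cV' (τ v) :=
  iso_restricts_to_tau_general lam lam' b b' hlam hlam' d cV hnil d' cV' hnil' φ hφ_d hφ_c τ hτ
end

section
/- Let λ ∈ ℂ*, b ∈ ℂ \ {1}, n ∈ ℕ, and let V be an infinite-dimensional irreducible Virasoro module on which each d_k acts locally finitely for k large. Then the action of the subalgebra V_+^{(n)} = span{d_i : i > n} on Ω(λ,b) ⊗ V is not locally finite: there exists a vector w such that the span of {d_{n+1}^k w : k ∈ ℕ} is infinite-dimensional. -/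
/-!
In `Ω(λ, b)` the operator `d_m` raises the `∂`-degree of every polynomial by one and multiplies
its top coefficient by `λ^m ≠ 0`. Contracting the `V`-factor of `d_m^k (1 ⊗ v)` with a functional
`ξ` satisfying `ξ v = 1` therefore gives a polynomial of degree exactly `k`, whatever `d_m` does
on `V`: the `V`-part of `d_m` only contributes terms of lower degree. Polynomials of pairwise
distinct degrees are linearly independent, hence so are the vectors `d_m^k (1 ⊗ v)`.
-/

open Polynomial TensorProduct

namespace Polynomial

variable {R : Type*} [CommRing R]

theorem natDegree_comp_X_sub_C_le (f : R[X]) (c : R) :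
    (f.comp (X - C c)).natDegree ≤ f.natDegree :=
  natDegree_comp_le.trans (mul_le_of_le_one_right' (natDegree_X_sub_C_le c))

theorem coeff_comp_X_sub_C_of_natDegree_le [Nontrivial R] {f : R[X]} {k : ℕ}
    (hf : f.natDegree ≤ k) (c : R) : (f.comp (X - C c)).coeff k = f.coeff k := by
  rcases hf.lt_or_eq with hlt | rfl
  · have hcomp := (natDegree_comp_X_sub_C_le f c).trans_lt hlt
    rw [coeff_eq_zero_of_natDegree_lt hcomp, coeff_eq_zero_of_natDegree_lt hlt]
  · have h := coeff_comp_degree_mul_degree (p := f) (q := X - C c) (by simp)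
    rwa [natDegree_X_sub_C, mul_one, leadingCoeff_X_sub_C, one_pow, mul_one] at h

def RaisesDegree (a : R) (A : Module.End R R[X]) : Prop :=
  ∀ (k : ℕ) (f : R[X]), f.natDegree ≤ k →
    (A f).natDegree ≤ k + 1 ∧ (A f).coeff (k + 1) = a * f.coeff k

end Polynomial

theorem omegaD_raisesDegree (lam b : ℂ) (m : ℤ) : RaisesDegree (lam ^ m) (omegaD lam b m) := by
  intro k f hf
  set g := f.comp (X - C (m : ℂ))
  have hg : g.natDegree ≤ k := (natDegree_comp_X_sub_C_le f _).trans hf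
  have hprod : ((X + C ((m : ℂ) * (b - 1))) * g).natDegree ≤ k + 1 := by
    rw [add_comm k]
    exact natDegree_mul_le_of_le ((natDegree_X_add_C _).le) hg
  refine ⟨(natDegree_smul_le _ _).trans hprod, ?_⟩
  have hg_succ : g.coeff (k + 1) = 0 := coeff_eq_zero_of_natDegree_lt (by omega)
  change (lam ^ m • ((X + C ((m : ℂ) * (b - 1))) * g)).coeff (k + 1) = _
  rw [coeff_smul, add_mul, coeff_add, coeff_X_mul, coeff_C_mul, hg_succ,
    coeff_comp_X_sub_C_of_natDegree_le hf, smul_eq_mul, mul_zero, add_zero]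

section

variable {R : Type*} [CommRing R] {V : Type*} [AddCommGroup V] [Module R V]

noncomputable def pairRight (ξ : Module.Dual R V) : R[X] ⊗[R] V →ₗ[R] R[X] :=
  (TensorProduct.rid R R[X]).toLinearMap ∘ₗ LinearMap.lTensor R[X] ξ

theorem pairRight_tmul (ξ : Module.Dual R V) (f : R[X]) (v : V) :
    pairRight ξ (f ⊗ₜ v) = ξ v • f := by
  simp [pairRight]

theorem pairRight_rTensor_add_lTensor (ξ : Module.Dual R V) (A : Module.End R R[X])
    (B : Module.End R V) (t : R[X] ⊗[R] V) :
    pairRight ξ ((LinearMap.rTensor V A + LinearMap.lTensor R[X] B) t) =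
      A (pairRight ξ t) + pairRight (ξ ∘ₗ B) t := by
  induction t using TensorProduct.induction_on with
  | zero => simp
  | tmul f v => simp [pairRight_tmul]
  | add s t hs ht => simp only [map_add, hs, ht]; abel

theorem pairRight_pow_one_tmul {a : R} {A : Module.End R R[X]} (hA : RaisesDegree a A)
    (B : Module.End R V) (v : V) (k : ℕ) (ξ : Module.Dual R V) :
    (pairRight ξ (((LinearMap.rTensor V A + LinearMap.lTensor R[X] B) ^ k) (1 ⊗ₜ v))).natDegree
        ≤ k ∧
      (pairRight ξ (((LinearMap.rTensor V A + LinearMap.lTensor R[X] B) ^ k) (1 ⊗ₜ v))).coeff k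
        = a ^ k * ξ v := by
  induction k generalizing ξ with
  | zero => simp [pairRight_tmul, smul_eq_C_mul]
  | succ k ih =>
    obtain ⟨hdeg, hcoeff⟩ := ih ξ
    obtain ⟨hA_deg, hA_coeff⟩ := hA k _ hdeg
    have hB_deg := (ih (ξ ∘ₗ B)).1
    rw [pow_succ', Module.End.mul_apply, pairRight_rTensor_add_lTensor]
    refine ⟨natDegree_add_le_of_degree_le hA_deg (hB_deg.trans k.le_succ), ?_⟩
    rw [coeff_add, hA_coeff, hcoeff,
      coeff_eq_zero_of_natDegree_lt (hB_deg.trans_lt k.lt_succ_self), add_zero, pow_succ', mul_assoc]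

end

theorem linearIndependent_pow_apply_one_tmul {K V : Type*} [Field K] [AddCommGroup V]
    [Module K V] {a : K} (ha : a ≠ 0) {A : Module.End K K[X]} (hA : RaisesDegree a A)
    (B : Module.End K V) {v : V} (hv : v ≠ 0) :
    LinearIndependent K fun k : ℕ ↦
      ((LinearMap.rTensor V A + LinearMap.lTensor K[X] B) ^ k) (1 ⊗ₜ v) := by
  obtain ⟨ξ, hξ⟩ := Module.Projective.exists_dual_eq_one K hv
  let S : Polynomial.Sequence K :=
    { elems' := fun k ↦
        pairRight ξ (((LinearMap.rTensor V A + LinearMap.lTensor K[X] B) ^ k) (1 ⊗ₜ v))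
      degree_eq' := fun k ↦ by
        obtain ⟨hdeg, hcoeff⟩ := pairRight_pow_one_tmul hA B v k ξ
        refine degree_eq_of_le_of_coeff_ne_zero (degree_le_of_natDegree_le hdeg) ?_
        rw [hcoeff, hξ, mul_one]
        exact pow_ne_zero k ha }
  exact LinearIndependent.of_comp (pairRight ξ) S.linearIndependent

theorem tensor_not_locally_finite_general {V : Type*} [AddCommGroup V] [Module ℂ V] [Nontrivial V]
    (lam b : ℂ) (hlam : lam ≠ 0)
    (d : ℤ → Module.End ℂ V)
    (n : ℕ) :
    ∃ w : Polynomial ℂ ⊗[ℂ] V,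
      ¬ FiniteDimensional ℂ (Submodule.span ℂ
        (Set.range fun k : ℕ => ((tensorD (omegaD lam b) d ((n : ℤ) + 1)) ^ k) w)) := by
  obtain ⟨v, hv⟩ := exists_ne (0 : V)
  refine ⟨1 ⊗ₜ v, fun hfin ↦ ?_⟩
  have hli : LinearIndependent ℂ fun k : ℕ ↦ (tensorD (omegaD lam b) d (n + 1) ^ k) (1 ⊗ₜ v) :=
    linearIndependent_pow_apply_one_tmul (zpow_ne_zero _ hlam) (omegaD_raisesDegree lam b _) _ hv
  exact Module.Finite.not_linearIndependent_of_infinite _ (linearIndependent_span hli)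

/-- for an infinite-dimensional irreducible `V` on which each `d_k` with `k`
large acts locally finitely, the action of `V_+^{(n)}` on `Ω(λ,b) ⊗ V` is not locally
finite: some vector `w` has infinite-dimensional span of `{d_{n+1}^k w : k ∈ ℕ}`. -/
theorem tensor_not_locally_finite {V : Type*} [AddCommGroup V] [Module ℂ V] [Nontrivial V]
    (lam b : ℂ) (hlam : lam ≠ 0) (hb : b ≠ 1)
    (d : ℤ → Module.End ℂ V) (cV : Module.End ℂ V) (hrep : VirRep d cV)
    (hirr : ∀ p : Submodule ℂ V, VirInvariant d cV p → p = ⊥ ∨ p = ⊤)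
    (hinf : ¬ FiniteDimensional ℂ V)
    (hlf : ∃ R : ℤ, ∀ k : ℤ, R ≤ k → ∀ v : V,
      FiniteDimensional ℂ (Submodule.span ℂ (Set.range fun m : ℕ => ((d k) ^ m) v)))
    (n : ℕ) (hn : 0 < n) :
    ∃ w : Polynomial ℂ ⊗[ℂ] V,
      ¬ FiniteDimensional ℂ (Submodule.span ℂ
        (Set.range fun k : ℕ => ((tensorD (omegaD lam b) d ((n : ℤ) + 1)) ^ k) w)) :=
  tensor_not_locally_finite_general lam b hlam d n
end

section
/- Let λ ∈ ℂ* and n ∈ ℤ_+. Then the subspace b_{λ,n} = span_ℂ{ d_k - λ^{k-n+1} d_{n-1} : k ≥ n } is a Lie subalgebra of the Virasoro algebra: the bracket of any two of the listed generators lies again in b_{λ,n}. -/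
open Polynomial TensorProduct

/-!
Write `e_m = d_m - λ^{m-n+1} d_{n-1}`, so that `e_{n-1} = 0`. For `k, l ≥ n` no central term
occurs in the brackets of `d_k, d_l, d_{n-1}` (an index pair summing to `0` has its first index in
`{-1, 0, 1}`, where `i³ - i = 0`), and expanding gives
`[e_k, e_l] = (l-k) e_{k+l} - λ^{l-n+1}(n-1-k) e_{k+n-1} - λ^{k-n+1}(l-n+1) e_{n-1+l}`:
the `d_{n-1}`-coefficients agree because `λ^{k+l-n+1} = λ^{l-n+1} λ^k = λ^{k-n+1} λ^l`.
All indices on the right are `≥ n - 1`.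
-/

section VirasoroSubalgebra

variable {K L : Type*} [Field K] [LieRing L] [LieAlgebra K L]

theorem virasoro_lie_eq_witt {d : ℤ → L} {c : L}
    (hd : ∀ i j : ℤ, ⁅d i, d j⁆ =
      ((j : K) - (i : K)) • d (i + j) +
        (if i + j = 0 then ((i : K) ^ 3 - (i : K)) / 12 else 0) • c)
    {i j : ℤ} (hij : i + j = 0 → i = -1 ∨ i = 0 ∨ i = 1) :
    ⁅d i, d j⁆ = ((j : K) - (i : K)) • d (i + j) := by
  rw [hd, add_eq_left]
  split_ifs with h
  · rcases hij h with rfl | rfl | rfl <;> norm_num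
  · exact zero_smul K c

/-- The spanning vectors of `b_{λ,n}` are `bGen d λ n m`, `m ≥ n`. -/
def bGen (d : ℤ → L) (lam : K) (n m : ℤ) : L :=
  d m - lam ^ (m - n + 1) • d (n - 1)

theorem bGen_sub_one (d : ℤ → L) (lam : K) (n : ℤ) : bGen d lam n (n - 1) = 0 := by
  simp [bGen]

theorem bGen_mem_span (d : ℤ → L) (lam : K) {n m : ℤ} (hm : n - 1 ≤ m) :
    bGen d lam n m ∈ Submodule.span K {x | ∃ m, n ≤ m ∧ x = bGen d lam n m} := by
  rcases hm.eq_or_lt with rfl | hlt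
  · rw [bGen_sub_one]
    exact zero_mem _
  · exact Submodule.subset_span ⟨m, by omega, rfl⟩

theorem lie_bGen {d : ℤ → L} {lam : K} (hlam : lam ≠ 0) {n k l : ℤ}
    (hkl : ⁅d k, d l⁆ = ((l : K) - (k : K)) • d (k + l))
    (hkn : ⁅d k, d (n - 1)⁆ = (((n - 1 : ℤ) : K) - (k : K)) • d (k + (n - 1)))
    (hnl : ⁅d (n - 1), d l⁆ = ((l : K) - ((n - 1 : ℤ) : K)) • d (n - 1 + l)) :
    ⁅bGen d lam n k, bGen d lam n l⁆ =
      ((l : K) - k) • bGen d lam n (k + l)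
        - (lam ^ (l - n + 1) * ((n - 1 : ℤ) - k)) • bGen d lam n (k + (n - 1))
        - (lam ^ (k - n + 1) * (l - (n - 1 : ℤ))) • bGen d lam n (n - 1 + l) := by
  have hk : lam ^ (k + (n - 1) - n + 1) = lam ^ k := by ring_nf
  have hl : lam ^ (n - 1 + l - n + 1) = lam ^ l := by ring_nf
  have hpow_add : lam ^ (k + l - n + 1) = lam ^ (k - n + 1) * lam ^ l := by
    rw [← zpow_add₀ hlam]; ring_nf
  have hpow_comm : lam ^ (l - n + 1) * lam ^ k = lam ^ (k - n + 1) * lam ^ l := by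
    rw [← zpow_add₀ hlam, ← zpow_add₀ hlam]; ring_nf
  simp only [bGen, lie_sub, sub_lie, lie_smul, smul_lie, lie_self, smul_zero, hkl, hkn, hnl,
    hk, hl, hpow_add]
  push_cast
  match_scalars
  · ring
  · ring
  · ring
  · linear_combination ((k : K) - n + 1) * hpow_comm

end VirasoroSubalgebra

theorem subalgebra_b_lambda_n_general {L : Type*} [LieRing L] [LieAlgebra ℂ L]
    (d : ℤ → L) (c : L)
    (hd : ∀ i j : ℤ, ⁅d i, d j⁆ =
      ((j : ℂ) - (i : ℂ)) • d (i + j) +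
        (if i + j = 0 then ((i : ℂ) ^ 3 - (i : ℂ)) / 12 else 0) • c)
    (lam : ℂ) (hlam : lam ≠ 0) (n : ℕ) (k l : ℤ) (hk : (n : ℤ) ≤ k) (hl : (n : ℤ) ≤ l) :
    ⁅d k - lam ^ (k - (n : ℤ) + 1) • d ((n : ℤ) - 1),
        d l - lam ^ (l - (n : ℤ) + 1) • d ((n : ℤ) - 1)⁆ ∈
      Submodule.span ℂ
        {x : L | ∃ m : ℤ, (n : ℤ) ≤ m ∧
          x = d m - lam ^ (m - (n : ℤ) + 1) • d ((n : ℤ) - 1)} := by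
  change ⁅bGen d lam n k, bGen d lam n l⁆ ∈
    Submodule.span ℂ {x | ∃ m, (n : ℤ) ≤ m ∧ x = bGen d lam n m}
  rw [lie_bGen hlam (virasoro_lie_eq_witt hd fun _ => by omega)
    (virasoro_lie_eq_witt hd fun _ => by omega) (virasoro_lie_eq_witt hd fun _ => by omega)]
  refine sub_mem (sub_mem ?_ ?_) ?_ <;> refine Submodule.smul_mem _ _ (bGen_mem_span d lam ?_)
    <;> omega

/-- in any Lie algebra containing elements `d_i` (`i ∈ ℤ`) and a central `c`
satisfying the Virasoro relations, the subspace
`b_{λ,n} = span{d_k - λ^{k-n+1} d_{n-1} : k ≥ n}` is a Lie subalgebra: the bracket of any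
two generators lies again in `b_{λ,n}`. -/
theorem subalgebra_b_lambda_n {L : Type*} [LieRing L] [LieAlgebra ℂ L]
    (d : ℤ → L) (c : L)
    (hc : ∀ i : ℤ, ⁅c, d i⁆ = 0)
    (hd : ∀ i j : ℤ, ⁅d i, d j⁆ =
      ((j : ℂ) - (i : ℂ)) • d (i + j) +
        (if i + j = 0 then ((i : ℂ) ^ 3 - (i : ℂ)) / 12 else 0) • c)
    (lam : ℂ) (hlam : lam ≠ 0) (n : ℕ) (k l : ℤ) (hk : (n : ℤ) ≤ k) (hl : (n : ℤ) ≤ l) :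
    ⁅d k - lam ^ (k - (n : ℤ) + 1) • d ((n : ℤ) - 1),
        d l - lam ^ (l - (n : ℤ) + 1) • d ((n : ℤ) - 1)⁆ ∈
      Submodule.span ℂ
        {x : L | ∃ m : ℤ, (n : ℤ) ≤ m ∧
          x = d m - lam ^ (m - (n : ℤ) + 1) • d ((n : ℤ) - 1)} :=
  subalgebra_b_lambda_n_general d c hd lam hlam n k l hk hl
end

section
/- Let λ ∈ ℂ*, n ∈ ℤ_+, and s_n, …, s_{2n} ∈ ℂ. The linear functional on b_{λ,n} = span{d_k - λ^{k-n+1}d_{n-1} : k ≥ n} defined by (d_k - λ^{k-n+1}d_{n-1}) ↦ s_k for n ≤ k ≤ 2n and (d_k - λ^{k-n+1}d_{n-1}) ↦ -(k-2n)s_{2n-1}λ^{k-2n+1} + (k-2n+1)s_{2n}λ^{k-2n} for k > 2n (with s_{-1} := 0) is a one-dimensional representation of b_{λ,n}: it vanishes on all brackets [x,y] for x, y ∈ b_{λ,n}. -/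
open Polynomial TensorProduct

/-!
With `t = ψ(d_{n-1})`, the prescribed values say
`ψ(d_m) = λ^{m-2n} (λ^{n+1} t - (m-2n) s_{2n-1} λ + (m-2n+1) s_{2n})` for `m > 2n`, and (thanks
to `s_{-1} := 0`) the same formula holds for `m = 2n - 1` and `m = 2n`. So on `m ≥ 2n - 1`,
`ψ(d_m) = λ^m q(m)` with `q` affine. For `k, l ≥ n` no central terms occur and the bracket of
the two generators is
`(l-k) d_{k+l} + λ^{l-n+1} (k-n+1) d_{k+n-1} - λ^{k-n+1} (l-n+1) d_{l+n-1}`; its image under `ψ`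
is `λ^{k+l} ((l-k) q(k+l) + (k-n+1) q(k+n-1) - (l-n+1) q(l+n-1))`, which vanishes for every
affine `q`.
-/

theorem exists_apply_d_eq_zpow_mul_affine {L : Type*} [AddCommGroup L] [Module ℂ L]
    (d : ℤ → L) {lam : ℂ} (hlam : lam ≠ 0) {n : ℕ} {s : ℤ → ℂ} {ψ : L →ₗ[ℂ] ℂ}
    (hψ : ∀ m : ℤ, (n : ℤ) ≤ m →
      ψ (d m - lam ^ (m - (n : ℤ) + 1) • d ((n : ℤ) - 1)) =
        if m ≤ 2 * (n : ℤ) then s m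
        else -((m : ℂ) - 2 * (n : ℂ)) * (if 1 ≤ n then s (2 * (n : ℤ) - 1) else 0) *
            lam ^ (m - 2 * (n : ℤ) + 1) +
          ((m : ℂ) - 2 * (n : ℂ) + 1) * s (2 * (n : ℤ)) * lam ^ (m - 2 * (n : ℤ))) :
    ∃ A B : ℂ, ∀ m : ℤ, 2 * (n : ℤ) - 1 ≤ m → ψ (d m) = lam ^ m * (A + B * m) := by
  set a : ℂ := if 1 ≤ n then s (2 * (n : ℤ) - 1) else 0
  set b := s (2 * (n : ℤ))
  have hψd : ∀ m : ℤ, 2 * (n : ℤ) - 1 ≤ m → ψ (d m) = lam ^ (m - 2 * (n : ℤ)) *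
      (lam ^ ((n : ℤ) + 1) * ψ (d ((n : ℤ) - 1)) - ((m : ℂ) - 2 * n) * a * lam +
        ((m : ℂ) - 2 * n + 1) * b) := by
    intro m hm
    rcases lt_or_ge m n with hmn | hmn
    · obtain ⟨rfl, rfl⟩ : n = 0 ∧ m = -1 := by omega
      simp [a, hlam]
    have h := hψ m hmn
    rw [map_sub, map_smul, smul_eq_mul, sub_eq_iff_eq_add] at h
    have hpow : lam ^ (m - n + 1) = lam ^ (m - 2 * (n : ℤ)) * lam ^ ((n : ℤ) + 1) := by
      rw [← zpow_add₀ hlam]; ring_nf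
    rw [h, hpow]
    split_ifs with hm2
    · obtain rfl | rfl : m = 2 * n - 1 ∨ m = 2 * n := by omega
      · have hn : 1 ≤ n := by omega
        simp only [a, if_pos hn, show 2 * (n : ℤ) - 1 - 2 * n = -1 by ring, zpow_neg_one]
        push_cast
        field_simp
        ring
      · simp only [b, sub_self, zpow_zero]
        push_cast
        ring
    · rw [zpow_add_one₀ hlam]
      ring
  refine ⟨lam ^ (-(2 * (n : ℤ))) *
      (lam ^ ((n : ℤ) + 1) * ψ (d ((n : ℤ) - 1)) + 2 * n * a * lam + (1 - 2 * n) * b),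
    lam ^ (-(2 * (n : ℤ))) * (b - a * lam), fun m hm => ?_⟩
  rw [hψd m hm, zpow_sub₀ hlam, zpow_neg]
  field_simp
  ring

section Virasoro

variable {L : Type*} [LieRing L] [LieAlgebra ℂ L] {d : ℤ → L} {c : L}

theorem lie_d_eq_of_neg_one_le
    (hd : ∀ i j : ℤ, ⁅d i, d j⁆ =
      ((j : ℂ) - (i : ℂ)) • d (i + j) +
        (if i + j = 0 then ((i : ℂ) ^ 3 - (i : ℂ)) / 12 else 0) • c)
    {i j : ℤ} (hi : -1 ≤ i) (hj : -1 ≤ j) :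
    ⁅d i, d j⁆ = ((j : ℂ) - i) • d (i + j) := by
  rw [hd, add_eq_left]
  split_ifs with hij
  · obtain rfl | rfl | rfl : i = -1 ∨ i = 0 ∨ i = 1 := by omega
    all_goals norm_num
  · exact zero_smul ℂ c

theorem apply_lie_sub_smul_eq_zero
    (hd : ∀ i j : ℤ, ⁅d i, d j⁆ =
      ((j : ℂ) - (i : ℂ)) • d (i + j) +
        (if i + j = 0 then ((i : ℂ) ^ 3 - (i : ℂ)) / 12 else 0) • c)
    {μ : ℂ} (hμ : μ ≠ 0) {n : ℤ} (hn : 0 ≤ n) (ψ : L →ₗ[ℂ] ℂ) {A B : ℂ}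
    (hψ : ∀ m : ℤ, 2 * n - 1 ≤ m → ψ (d m) = μ ^ m * (A + B * m))
    {k l : ℤ} (hk : n ≤ k) (hl : n ≤ l) :
    ψ ⁅d k - μ ^ (k - n + 1) • d (n - 1), d l - μ ^ (l - n + 1) • d (n - 1)⁆ = 0 := by
  have hkl : μ ^ (l - n + 1) * μ ^ (k + (n - 1)) = μ ^ (k + l) := by
    rw [← zpow_add₀ hμ]; ring_nf
  have hlk : μ ^ (k - n + 1) * μ ^ (n - 1 + l) = μ ^ (k + l) := by
    rw [← zpow_add₀ hμ]; ring_nf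
  rw [lie_sub, sub_lie, sub_lie, lie_smul, lie_smul, smul_lie, smul_lie, lie_self, smul_zero,
    smul_zero, sub_zero, lie_d_eq_of_neg_one_le hd (by omega) (by omega),
    lie_d_eq_of_neg_one_le hd (by omega) (by omega),
    lie_d_eq_of_neg_one_le hd (by omega) (by omega)]
  simp only [map_sub, map_smul, smul_eq_mul]
  rw [hψ _ (by omega), hψ _ (by omega), hψ _ (by omega)]
  push_cast
  linear_combination (-(((n : ℂ) - 1 - k) * (A + B * (k + (n - 1))))) * hkl -
    ((l - (n - 1)) * (A + B * (n - 1 + l))) * hlk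

end Virasoro


theorem character_of_b_lambda_n_general {L : Type*} [LieRing L] [LieAlgebra ℂ L]
    (d : ℤ → L) (c : L)
    (hd : ∀ i j : ℤ, ⁅d i, d j⁆ =
      ((j : ℂ) - (i : ℂ)) • d (i + j) +
        (if i + j = 0 then ((i : ℂ) ^ 3 - (i : ℂ)) / 12 else 0) • c)
    (lam : ℂ) (hlam : lam ≠ 0) (n : ℕ) (s : ℤ → ℂ)
    (ψ : L →ₗ[ℂ] ℂ)
    (hψ : ∀ m : ℤ, (n : ℤ) ≤ m →
      ψ (d m - lam ^ (m - (n : ℤ) + 1) • d ((n : ℤ) - 1)) =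
        if m ≤ 2 * (n : ℤ) then s m
        else -((m : ℂ) - 2 * (n : ℂ)) * (if 1 ≤ n then s (2 * (n : ℤ) - 1) else 0) *
            lam ^ (m - 2 * (n : ℤ) + 1) +
          ((m : ℂ) - 2 * (n : ℂ) + 1) * s (2 * (n : ℤ)) * lam ^ (m - 2 * (n : ℤ))) :
    ∀ k l : ℤ, (n : ℤ) ≤ k → (n : ℤ) ≤ l →
      ψ ⁅d k - lam ^ (k - (n : ℤ) + 1) • d ((n : ℤ) - 1),
          d l - lam ^ (l - (n : ℤ) + 1) • d ((n : ℤ) - 1)⁆ = 0 := by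
  intro k l hk hl
  obtain ⟨A, B, hAB⟩ := exists_apply_d_eq_zpow_mul_affine d hlam hψ
  exact apply_lie_sub_smul_eq_zero hd hlam (Nat.cast_nonneg n) ψ hAB hk hl

/-- the linear functional on `b_{λ,n}` sending the generator
`d_k - λ^{k-n+1}d_{n-1}` to `s_k` for `n ≤ k ≤ 2n` and to
`-(k-2n)s_{2n-1}λ^{k-2n+1} + (k-2n+1)s_{2n}λ^{k-2n}` for `k > 2n` (with `s_{-1} := 0`)
is a one-dimensional representation: it vanishes on all brackets of elements of `b_{λ,n}`. -/
theorem character_of_b_lambda_n {L : Type*} [LieRing L] [LieAlgebra ℂ L]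
    (d : ℤ → L) (c : L)
    (hc : ∀ i : ℤ, ⁅c, d i⁆ = 0)
    (hd : ∀ i j : ℤ, ⁅d i, d j⁆ =
      ((j : ℂ) - (i : ℂ)) • d (i + j) +
        (if i + j = 0 then ((i : ℂ) ^ 3 - (i : ℂ)) / 12 else 0) • c)
    (lam : ℂ) (hlam : lam ≠ 0) (n : ℕ) (s : ℤ → ℂ)
    (ψ : L →ₗ[ℂ] ℂ)
    (hψ : ∀ m : ℤ, (n : ℤ) ≤ m →
      ψ (d m - lam ^ (m - (n : ℤ) + 1) • d ((n : ℤ) - 1)) =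
        if m ≤ 2 * (n : ℤ) then s m
        else -((m : ℂ) - 2 * (n : ℂ)) * (if 1 ≤ n then s (2 * (n : ℤ) - 1) else 0) *
            lam ^ (m - 2 * (n : ℤ) + 1) +
          ((m : ℂ) - 2 * (n : ℂ) + 1) * s (2 * (n : ℤ)) * lam ^ (m - 2 * (n : ℤ))) :
    ∀ k l : ℤ, (n : ℤ) ≤ k → (n : ℤ) ≤ l →
      ψ ⁅d k - lam ^ (k - (n : ℤ) + 1) • d ((n : ℤ) - 1),
          d l - lam ^ (l - (n : ℤ) + 1) • d ((n : ℤ) - 1)⁆ = 0 :=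
  character_of_b_lambda_n_general d c hd lam hlam n s ψ hψ
end
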